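/- arXiv:1509.08876 — 6 statements merged into one kernel-verified Lean document; each statement's English description precedes it below -/
import Mathlib

section
/- For every integer n ≥ 0, the expected online domination number of the path is given exactly by γ_o(P_n) = (n+1)/2 − (1/2) · Σ_{j=0}^{n} (n+1−j)·(−2)^j / j!. -/
/- The path graph `P n` on `Fin n`: vertex `v` represents the label `v + 1 ∈ {1, ..., n}`,
   and consecutive labels are adjacent. -/
def pathGraph (n : ℕ) : SimpleGraph (Fin n) where
  Adj i j := (i : ℕ) + 1 = j ∨ (j : ℕ) + 1 = i
  symm := ⟨fun i j h => h.symm⟩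
  loopless := ⟨by intro i h; omega⟩

/- The dominating set produced by the online domination algorithm on `G` when vertices are
   revealed in the order of the list `l`: a revealed vertex is added iff no neighbor is
   already in the set. -/
open Classical in
noncomputable def domList {V : Type*} [DecidableEq V] (G : SimpleGraph V) (l : List V) : Finset V :=
  l.foldl (fun D v => if ∃ w ∈ D, G.Adj w v then D else insert v D) ∅

/- `Γ(π)`: the dominating set produced on `P n` when vertices are revealed in the order
   `π 0, π 1, ..., π (n-1)`. -/
noncomputable def GammaSet (n : ℕ) (π : Equiv.Perm (Fin n)) : Finset (Fin n) :=
  domList (pathGraph n) (List.ofFn fun i => π i)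

/- `γ(π) = |Γ(π)|`. -/
noncomputable def gamma (n : ℕ) (π : Equiv.Perm (Fin n)) : ℕ := (GammaSet n π).card

/- `γ_o(P n)`: the expected size of the dominating set produced by the online algorithm on the
   path `P n`, for a uniformly random permutation. -/
noncomputable def gammaOPath (n : ℕ) : ℝ :=
  (∑ π : Equiv.Perm (Fin n), (gamma n π : ℝ)) / (Nat.factorial n)

/-!
The first vertex revealed always enters the dominating set, and from then on the vertices on
either side of it are processed independently, each side in a uniformly random order. Hence the
mean `e n` over all orderings of `{0, …, n - 1}` satisfies `n e n = n + 2 ∑_{m < n - 1} e m`.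
With `T k` the `k`-th partial sum of the exponential series at `-2`, the closed form equals
`(n + 1 - T (n + 1) - (n + 2) T (n + 2)) / 2`, which satisfies the same recurrence because
`(k + 2) T (k + 2) = k T (k + 1) + 2 T k`.
-/

open Finset SimpleGraph
open scoped BigOperators Nat

section Orderings

variable {α β K : Type*} [Semifield K] [CharZero K]

def orderings (s : Finset α) : Finset (List α) :=
  ⟨Multiset.lists s.val, Multiset.lists_nodup_finset s⟩

lemma mem_orderings {s : Finset α} {l : List α} :
    l ∈ orderings s ↔ (l : Multiset α) = s.val := by
  rw [orderings, mem_mk, Multiset.mem_lists_iff, eq_comm, Multiset.quot_mk_to_coe]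

lemma mem_orderings_iff_nodup {s : Finset α} {l : List α} :
    l ∈ orderings s ↔ l.Nodup ∧ ∀ a, a ∈ l ↔ a ∈ s := by
  rw [mem_orderings]
  refine ⟨fun h => ⟨Multiset.coe_nodup.mp (h ▸ s.nodup), fun a => ?_⟩,
    fun ⟨hl, hs⟩ => (Multiset.Nodup.ext (Multiset.coe_nodup.mpr hl) s.nodup).mpr hs⟩
  rw [← Multiset.mem_coe, h]
  rfl

lemma card_orderings (s : Finset α) : #(orderings s) = (#s)! := by
  rw [orderings, card_mk, ← coe_toList s, Multiset.lists_coe, Multiset.coe_card,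
    List.length_permutations, length_toList]

lemma orderings_nonempty (s : Finset α) : (orderings s).Nonempty :=
  card_pos.mp (by rw [card_orderings]; exact Nat.factorial_pos _)

@[simp]
lemma orderings_empty : orderings (∅ : Finset α) = {[]} := by
  ext l
  rw [mem_orderings, mem_singleton, empty_val, Multiset.coe_eq_zero]

lemma expect_perm_ofFn (n : ℕ) (F : List (Fin n) → K) :
    𝔼 π : Equiv.Perm (Fin n), F (List.ofFn π) = 𝔼 l ∈ orderings univ, F l := by
  have hinj : Function.Injective fun π : Equiv.Perm (Fin n) => List.ofFn π :=
    fun π σ h => Equiv.ext (congrFun (List.ofFn_injective h))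
  have himage : univ.image (fun π : Equiv.Perm (Fin n) => List.ofFn π) = orderings univ := by
    refine eq_of_subset_of_card_le (fun l hl => ?_) ?_
    · obtain ⟨π, -, rfl⟩ := mem_image.mp hl
      exact mem_orderings_iff_nodup.mpr ⟨List.nodup_ofFn.mpr π.injective,
        fun a => by simpa [List.mem_ofFn] using π.surjective a⟩
    · rw [card_orderings, card_image_of_injective _ hinj, card_univ, card_univ,
        Fintype.card_perm, Fintype.card_fin]
  rw [← himage, expect_image hinj.injOn]

variable [DecidableEq α]

lemma cons_mem_orderings {s : Finset α} {x : α} {t : List α} :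
    x :: t ∈ orderings s ↔ x ∈ s ∧ t ∈ orderings (s.erase x) := by
  simp only [mem_orderings, erase_val, ← Multiset.cons_coe]
  constructor
  · rintro h
    rw [← h, Multiset.erase_cons_head]
    exact ⟨by rw [mem_def, ← h]; exact Multiset.mem_cons_self _ _, rfl⟩
  · rintro ⟨hx, ht⟩
    rw [ht, Multiset.cons_erase hx]

lemma sum_orderings_cons {M : Type*} [AddCommMonoid M] {s : Finset α} (hs : s.Nonempty)
    (F : List α → M) :
    ∑ l ∈ orderings s, F l = ∑ x ∈ s, ∑ t ∈ orderings (s.erase x), F (x :: t) := by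
  rw [sum_sigma']
  symm
  refine sum_bij (fun p _ => p.1 :: p.2) (fun p hp => ?_) (fun p _ q _ h => ?_) (fun l hl => ?_)
    (fun _ _ => rfl)
  · rw [mem_sigma] at hp
    exact cons_mem_orderings.mpr hp
  · simp only [List.cons.injEq] at h
    exact Sigma.ext h.1 (heq_of_eq h.2)
  · cases l with
    | nil =>
      rw [mem_orderings, Multiset.coe_nil, eq_comm, val_eq_zero] at hl
      exact absurd hl hs.ne_empty
    | cons x t => exact ⟨⟨x, t⟩, mem_sigma.mpr (cons_mem_orderings.mp hl), rfl⟩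

lemma expect_orderings_cons {s : Finset α} (hs : s.Nonempty) (F : List α → K) :
    𝔼 l ∈ orderings s, F l = 𝔼 x ∈ s, 𝔼 t ∈ orderings (s.erase x), F (x :: t) := by
  have hinner : ∀ x ∈ s, 𝔼 t ∈ orderings (s.erase x), F (x :: t) =
      (∑ t ∈ orderings (s.erase x), F (x :: t)) / (#s - 1)! := fun x hx => by
    rw [expect_eq_sum_div_card, card_orderings, card_erase_of_mem hx]
  rw [expect_congr rfl hinner, expect_eq_sum_div_card, expect_eq_sum_div_card, ← sum_div,
    div_div, card_orderings, sum_orderings_cons hs, ← Nat.mul_factorial_pred hs.card_pos.ne',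
    Nat.cast_mul, mul_comm]

lemma expect_orderings_map [DecidableEq β] (f : α ↪ β) (s : Finset α) (F : List β → K) :
    𝔼 l ∈ orderings (s.map f), F l = 𝔼 t ∈ orderings s, F (t.map f) := by
  induction s using Finset.strongInduction generalizing F with
  | H s ih =>
    rcases s.eq_empty_or_nonempty with rfl | hs
    · simp
    rw [expect_orderings_cons (hs.map), expect_orderings_cons hs, map_eq_image,
      expect_image f.injective.injOn]
    refine expect_congr rfl fun x hx => ?_
    rw [← map_eq_image, ← map_erase, ih _ (erase_ssubset hx)]
    rfl

lemma expect_orderings_filter (p : α → Prop) [DecidablePred p] (s : Finset α)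
    (F : List α → K) :
    𝔼 l ∈ orderings s, F (l.filter p) = 𝔼 t ∈ orderings (s.filter p), F t := by
  induction s using Finset.strongInduction generalizing F with
  | H s ih =>
    rcases s.eq_empty_or_nonempty with rfl | hs
    · simp
    set A := 𝔼 t ∈ orderings (s.filter p), F t
    have hstep : ∀ x ∈ s, 𝔼 t ∈ orderings (s.erase x), F ((x :: t).filter p) =
        if p x then 𝔼 t ∈ orderings ((s.filter p).erase x), F (x :: t) else A := by
      intro x hx
      split_ifs with hpx
      · simp only [List.filter_cons, hpx, decide_true, ↓reduceIte]
        rw [ih _ (erase_ssubset hx) (fun t => F (x :: t)), filter_erase]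
      · simp only [List.filter_cons, hpx, decide_false, Bool.false_eq_true, ↓reduceIte]
        rw [ih _ (erase_ssubset hx), filter_erase,
          erase_eq_of_notMem fun h => hpx (mem_filter.mp h).2]
    have hfilter : ∑ x ∈ s.filter p, 𝔼 t ∈ orderings ((s.filter p).erase x), F (x :: t) =
        #(s.filter p) • A := by
      rcases (s.filter p).eq_empty_or_nonempty with hT | hT
      · simp [hT]
      · rw [← card_smul_expect, ← expect_orderings_cons hT]
    rw [expect_orderings_cons hs, expect_congr rfl hstep, expect_eq_sum_div_card, sum_ite,
      hfilter, sum_const, ← add_smul, card_filter_add_card_filter_not, nsmul_eq_mul,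
      mul_div_cancel_left₀ _ (Nat.cast_ne_zero.mpr hs.card_pos.ne')]

end Orderings

section OnlineDomination

variable {V W : Type*} [DecidableEq V] [DecidableEq W]

open Classical in
noncomputable def onlineDom (G : SimpleGraph V) (D : Finset V) (l : List V) : Finset V :=
  l.foldl (fun D v => if ∃ w ∈ D, G.Adj w v then D else insert v D) D

lemma domList_eq_onlineDom (G : SimpleGraph V) (l : List V) : domList G l = onlineDom G ∅ l := rfl

@[simp]
lemma onlineDom_nil (G : SimpleGraph V) (D : Finset V) : onlineDom G D [] = D := rfl

lemma onlineDom_cons_of_adj {G : SimpleGraph V} {D : Finset V} {v : V} (l : List V)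
    (h : ∃ w ∈ D, G.Adj w v) : onlineDom G D (v :: l) = onlineDom G D l := by
  rw [onlineDom, List.foldl_cons, if_pos h]; rfl

lemma onlineDom_cons_of_not_adj {G : SimpleGraph V} {D : Finset V} {v : V} (l : List V)
    (h : ¬∃ w ∈ D, G.Adj w v) : onlineDom G D (v :: l) = onlineDom G (insert v D) l := by
  rw [onlineDom, List.foldl_cons, if_neg h]; rfl

lemma onlineDom_cons_of_mem {G : SimpleGraph V} {D : Finset V} {v : V} (l : List V)
    (h : v ∈ D) : onlineDom G D (v :: l) = onlineDom G D l := by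
  by_cases hadj : ∃ w ∈ D, G.Adj w v
  · exact onlineDom_cons_of_adj l hadj
  · rw [onlineDom_cons_of_not_adj l hadj, insert_eq_of_mem h]

lemma onlineDom_subset (G : SimpleGraph V) (D : Finset V) (l : List V) :
    onlineDom G D l ⊆ D ∪ l.toFinset := by
  induction l generalizing D with
  | nil => simp
  | cons v l ih =>
    by_cases hadj : ∃ w ∈ D, G.Adj w v
    · rw [onlineDom_cons_of_adj l hadj]
      exact (ih D).trans (union_subset_union_right (by simp [List.toFinset_cons]))
    · rw [onlineDom_cons_of_not_adj l hadj, List.toFinset_cons, union_insert, ← insert_union]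
      exact ih _

lemma onlineDom_map {G : SimpleGraph V} {H : SimpleGraph W} (f : G ↪g H) (D : Finset V)
    (l : List V) :
    onlineDom H (D.map f.toEmbedding) (l.map f) = (onlineDom G D l).map f.toEmbedding := by
  induction l generalizing D with
  | nil => rfl
  | cons v l ih =>
    have hiff : (∃ w ∈ D.map f.toEmbedding, H.Adj w (f v)) ↔ ∃ w ∈ D, G.Adj w v := by
      simp [f.map_adj_iff]
    rw [List.map_cons]
    by_cases hadj : ∃ w ∈ D, G.Adj w v
    · rw [onlineDom_cons_of_adj _ (hiff.mpr hadj), onlineDom_cons_of_adj _ hadj, ih]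
    · rw [onlineDom_cons_of_not_adj _ (hiff.not.mpr hadj), onlineDom_cons_of_not_adj _ hadj,
        ← ih, map_insert]
      rfl

end OnlineDomination

lemma hasse_nat_adj {a b : ℕ} : (hasse ℕ).Adj a b ↔ a + 1 = b ∨ b + 1 = a := by
  rw [hasse_adj, Nat.covBy_iff_add_one_eq, Nat.covBy_iff_add_one_eq]

def pathGraphEmbedding (n : ℕ) : _root_.pathGraph n ↪g hasse ℕ where
  toEmbedding := Fin.valEmbedding
  map_rel_iff' := hasse_nat_adj

def addRightGraphEmbedding (k : ℕ) : hasse ℕ ↪g hasse ℕ where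
  toEmbedding := addRightEmbedding k
  map_rel_iff' := by simp only [addRightEmbedding_apply, hasse_nat_adj]; omega

/-- Once `v` is in the set, `v - 1` and `v + 1` are never added, so the two sides of `v` evolve
independently. -/
lemma onlineDom_insert_union (v : ℕ) (l : List ℕ) {D₁ D₂ : Finset ℕ}
    (h₁ : ∀ x ∈ D₁, x + 1 < v) (h₂ : ∀ x ∈ D₂, v + 1 < x) :
    onlineDom (hasse ℕ) (insert v (D₁ ∪ D₂)) l =
      insert v (onlineDom (hasse ℕ) D₁ (l.filter (· + 1 < v)) ∪
        onlineDom (hasse ℕ) D₂ (l.filter (v + 1 < ·))) := by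
  induction l generalizing D₁ D₂ with
  | nil => simp
  | cons w l ih =>
    rcases (by omega : w + 1 < v ∨ w + 1 = v ∨ w = v ∨ w = v + 1 ∨ v + 1 < w) with
      hw | hw | rfl | hw | hw
    · have hiff : (∃ u ∈ insert v (D₁ ∪ D₂), (hasse ℕ).Adj u w) ↔
          ∃ u ∈ D₁, (hasse ℕ).Adj u w := by
        simp only [mem_insert, mem_union, hasse_nat_adj]
        grind
      rw [List.filter_cons_of_pos (by simpa using hw),
        List.filter_cons_of_neg (by simp only [decide_eq_true_eq]; omega)]
      by_cases hadj : ∃ u ∈ D₁, (hasse ℕ).Adj u w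
      · rw [onlineDom_cons_of_adj _ (hiff.mpr hadj), onlineDom_cons_of_adj _ hadj, ih h₁ h₂]
      · rw [onlineDom_cons_of_not_adj _ (hiff.not.mpr hadj), onlineDom_cons_of_not_adj _ hadj,
          insert_comm, ← insert_union, ih _ h₂]
        simpa [forall_mem_insert] using ⟨hw, h₁⟩
    · rw [onlineDom_cons_of_adj _ ⟨v, mem_insert_self _ _, hasse_nat_adj.mpr (.inr hw)⟩,
        List.filter_cons_of_neg (by simp only [decide_eq_true_eq]; omega),
        List.filter_cons_of_neg (by simp only [decide_eq_true_eq]; omega),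
        ih h₁ h₂]
    · rw [onlineDom_cons_of_mem _ (mem_insert_self _ _),
        List.filter_cons_of_neg (by simp), List.filter_cons_of_neg (by simp), ih h₁ h₂]
    · rw [onlineDom_cons_of_adj _ ⟨v, mem_insert_self _ _, hasse_nat_adj.mpr (.inl hw.symm)⟩,
        List.filter_cons_of_neg (by simp only [decide_eq_true_eq]; omega),
        List.filter_cons_of_neg (by simp only [decide_eq_true_eq]; omega),
        ih h₁ h₂]
    · have hiff : (∃ u ∈ insert v (D₁ ∪ D₂), (hasse ℕ).Adj u w) ↔
          ∃ u ∈ D₂, (hasse ℕ).Adj u w := by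
        simp only [mem_insert, mem_union, hasse_nat_adj]
        grind
      rw [List.filter_cons_of_neg (by simp only [decide_eq_true_eq]; omega),
        List.filter_cons_of_pos (by simpa using hw)]
      by_cases hadj : ∃ u ∈ D₂, (hasse ℕ).Adj u w
      · rw [onlineDom_cons_of_adj _ (hiff.mpr hadj), onlineDom_cons_of_adj _ hadj, ih h₁ h₂]
      · rw [onlineDom_cons_of_not_adj _ (hiff.not.mpr hadj), onlineDom_cons_of_not_adj _ hadj,
          insert_comm, ← union_insert, ih h₁]
        simpa [forall_mem_insert] using ⟨hw, h₂⟩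

lemma card_onlineDom_cons (v : ℕ) (l : List ℕ) :
    #(onlineDom (hasse ℕ) ∅ (v :: l)) =
      1 + #(onlineDom (hasse ℕ) ∅ (l.filter (· + 1 < v))) +
        #(onlineDom (hasse ℕ) ∅ (l.filter (v + 1 < ·))) := by
  have hfilter : ∀ (p : ℕ → Prop) [DecidablePred p] x,
      x ∈ onlineDom (hasse ℕ) ∅ (l.filter p) → p x := fun p _ x hx =>
    (by simpa using onlineDom_subset _ _ _ hx : x ∈ l ∧ p x).2
  have hL := hfilter (· + 1 < v)
  have hR := hfilter (v + 1 < ·)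
  have hdisj : Disjoint (onlineDom (hasse ℕ) ∅ (l.filter (· + 1 < v)))
      (onlineDom (hasse ℕ) ∅ (l.filter (v + 1 < ·))) :=
    disjoint_left.mpr fun x hx hx' => by have := hL x hx; have := hR x hx'; omega
  have hv : v ∉ onlineDom (hasse ℕ) ∅ (l.filter (· + 1 < v)) ∪
      onlineDom (hasse ℕ) ∅ (l.filter (v + 1 < ·)) := by
    rw [mem_union, not_or]
    exact ⟨fun h => by have := hL v h; omega, fun h => by have := hR v h; omega⟩
  have hunion : (insert v ∅ : Finset ℕ) = insert v (∅ ∪ ∅) := by rw [empty_union]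
  rw [onlineDom_cons_of_not_adj _ (by simp), hunion,
    onlineDom_insert_union v l (by simp) (by simp), card_insert_of_notMem hv,
    card_union_of_disjoint hdisj]
  omega

noncomputable def meanOnlineDom (s : Finset ℕ) : ℝ :=
  𝔼 l ∈ orderings s, (#(onlineDom (hasse ℕ) ∅ l) : ℝ)

@[simp]
lemma meanOnlineDom_empty : meanOnlineDom ∅ = 0 := by simp [meanOnlineDom]

lemma meanOnlineDom_map_addRight (s : Finset ℕ) (k : ℕ) :
    meanOnlineDom (s.map (addRightEmbedding k)) = meanOnlineDom s := by
  rw [meanOnlineDom, meanOnlineDom, expect_orderings_map]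
  refine expect_congr rfl fun t _ => ?_
  have h := onlineDom_map (addRightGraphEmbedding k) ∅ t
  rw [map_empty] at h
  exact_mod_cast (congrArg card h).trans (card_map _)

lemma gammaOPath_eq_meanOnlineDom (n : ℕ) : gammaOPath n = meanOnlineDom (range n) := by
  have hcard : ∀ l : List (Fin n), #(onlineDom (_root_.pathGraph n) ∅ l) =
      #(onlineDom (hasse ℕ) ∅ (l.map Fin.valEmbedding)) := fun l => by
    rw [← card_map Fin.valEmbedding, ← map_empty Fin.valEmbedding]
    exact congrArg card (onlineDom_map (pathGraphEmbedding n) ∅ l).symm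
  have hfact : (n ! : ℝ) = Fintype.card (Equiv.Perm (Fin n)) := by
    rw [Fintype.card_perm, Fintype.card_fin]
  rw [gammaOPath, hfact, ← Fintype.expect_eq_sum_div_card]
  simp only [gamma, GammaSet, domList_eq_onlineDom]
  rw [expect_perm_ofFn n (fun l => (#(onlineDom (_root_.pathGraph n) ∅ l) : ℝ)), meanOnlineDom,
    ← Nat.Iio_eq_range, ← Fin.map_valEmbedding_univ, expect_orderings_map]
  exact expect_congr rfl fun l _ => by rw [hcard]

lemma meanOnlineDom_range_succ (n : ℕ) :
    meanOnlineDom (range (n + 1)) = 𝔼 v ∈ range (n + 1),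
      (1 + meanOnlineDom (range (v - 1)) + meanOnlineDom (range (n - v - 1))) := by
  rw [meanOnlineDom, expect_orderings_cons (nonempty_range_iff.mpr n.succ_ne_zero)]
  refine expect_congr rfl fun v hv => ?_
  rw [mem_range] at hv
  have hleft : ((range (n + 1)).erase v).filter (· + 1 < v) = range (v - 1) := by
    ext a; simp only [mem_filter, mem_erase, mem_range]; omega
  have hright : ((range (n + 1)).erase v).filter (v + 1 < ·) =
      (range (n - v - 1)).map (addRightEmbedding (v + 2)) := by
    ext a
    simp only [mem_filter, mem_erase, mem_range, mem_map, addRightEmbedding_apply]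
    constructor
    · intro h; exact ⟨a - (v + 2), by omega, by omega⟩
    · rintro ⟨b, hb, rfl⟩; omega
  simp only [card_onlineDom_cons, Nat.cast_add, Nat.cast_one, expect_add_distrib,
    expect_const (orderings_nonempty _)]
  rw [expect_orderings_filter (· + 1 < v) _ fun l => (#(onlineDom (hasse ℕ) ∅ l) : ℝ),
    expect_orderings_filter (v + 1 < ·) _ fun l => (#(onlineDom (hasse ℕ) ∅ l) : ℝ),
    hleft, hright, ← meanOnlineDom, ← meanOnlineDom, meanOnlineDom_map_addRight]

lemma succ_mul_meanOnlineDom_range (n : ℕ) :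
    (n + 1) * meanOnlineDom (range (n + 1)) =
      n + 1 + 2 * ∑ m ∈ range n, meanOnlineDom (range m) := by
  have hreflect : ∑ v ∈ range (n + 1), meanOnlineDom (range (n - v - 1)) =
      ∑ v ∈ range (n + 1), meanOnlineDom (range (v - 1)) := by
    rw [← sum_range_reflect]
    exact sum_congr rfl fun v hv => by rw [mem_range] at hv; congr 2; omega
  have hshift : ∑ v ∈ range (n + 1), meanOnlineDom (range (v - 1)) =
      ∑ m ∈ range n, meanOnlineDom (range m) := by
    simp [sum_range_succ']
  rw [meanOnlineDom_range_succ, expect_eq_sum_div_card, card_range, Nat.cast_succ,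
    mul_div_cancel₀ _ (by positivity), sum_add_distrib, sum_add_distrib, hreflect, hshift,
    sum_const, card_range, nsmul_eq_mul, mul_one, Nat.cast_succ]
  ring

noncomputable def expNegTwoPartialSum (n : ℕ) : ℝ :=
  ∑ j ∈ range (n + 1), (-2 : ℝ) ^ j / j !

local notation "T" => expNegTwoPartialSum

lemma expNegTwoPartialSum_recurrence (n : ℕ) :
    (n + 2) * T (n + 2) = n * T (n + 1) + 2 * T n := by
  have hterm :
      ((n : ℝ) + 2) * ((-2) ^ (n + 2) / (n + 2)!) = -2 * ((-2) ^ (n + 1) / (n + 1)!) := by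
    rw [Nat.factorial_succ (n + 1), Nat.cast_mul, pow_succ]
    field_simp
    push_cast
    ring
  simp only [expNegTwoPartialSum, sum_range_succ _ (n + 2), sum_range_succ _ (n + 1)]
  linear_combination hterm

lemma sum_range_expNegTwoPartialSum (n : ℕ) :
    ∑ k ∈ range n, T k = T n + (n + 1) * T (n + 1) := by
  induction n with
  | zero => norm_num [expNegTwoPartialSum, sum_range_succ]
  | succ n ih =>
    rw [sum_range_succ, ih]
    push_cast
    linear_combination -expNegTwoPartialSum_recurrence n

lemma sum_range_sub_mul (u : ℕ → ℝ) (n : ℕ) :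
    ∑ j ∈ range n, ((n : ℝ) - j) * u j = ∑ k ∈ range n, ∑ j ∈ range (k + 1), u j := by
  induction n with
  | zero => simp
  | succ n ih =>
    have hsplit : ∀ j, (((n + 1 : ℕ) : ℝ) - j) * u j = (n - j) * u j + u j := fun j => by
      push_cast; ring
    rw [sum_congr rfl fun j _ => hsplit j, sum_add_distrib, sum_range_succ _ n, ih,
      sum_range_succ (fun k => ∑ j ∈ range (k + 1), u j)]
    simp

noncomputable def onlineDomFormula (n : ℕ) : ℝ := (n + 1 - T (n + 1) - (n + 2) * T (n + 2)) / 2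

lemma onlineDomFormula_zero : onlineDomFormula 0 = 0 := by
  norm_num [onlineDomFormula, expNegTwoPartialSum, sum_range_succ]

lemma succ_mul_onlineDomFormula (n : ℕ) :
    (n + 1) * onlineDomFormula (n + 1) = n + 1 + 2 * ∑ m ∈ range n, onlineDomFormula m := by
  induction n with
  | zero => norm_num [onlineDomFormula, expNegTwoPartialSum, sum_range_succ, Nat.factorial]
  | succ n ih =>
    have R₁ := expNegTwoPartialSum_recurrence (n + 1)
    have R₂ := expNegTwoPartialSum_recurrence (n + 2)
    rw [sum_range_succ]
    simp only [onlineDomFormula] at ih ⊢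
    push_cast at ih R₁ R₂ ⊢
    linear_combination ih - ((n : ℝ) + 2) / 2 * R₂ - R₁ / 2

lemma onlineDomFormula_eq (n : ℕ) : onlineDomFormula n = ((n : ℝ) + 1) / 2 -
    (1 / 2) * ∑ j ∈ range (n + 1), ((n : ℝ) + 1 - (j : ℝ)) * (-2 : ℝ) ^ j / j ! := by
  have h := sum_range_sub_mul (fun j => (-2 : ℝ) ^ j / j !) (n + 1)
  have hT : ∀ k, ∑ j ∈ range (k + 1), (-2 : ℝ) ^ j / j ! = T k := fun k => rfl
  simp only [hT, Nat.cast_succ, ← mul_div_assoc] at h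
  rw [h, sum_range_expNegTwoPartialSum, onlineDomFormula]
  push_cast
  ring

lemma meanOnlineDom_range (n : ℕ) : meanOnlineDom (range n) = onlineDomFormula n := by
  induction n using Nat.strong_induction_on with
  | _ n ih =>
    rcases n with _ | n
    · simp [onlineDomFormula_zero]
    have hsum :
        ∑ m ∈ range n, meanOnlineDom (range m) = ∑ m ∈ range n, onlineDomFormula m :=
      sum_congr rfl fun m hm => ih m (by rw [mem_range] at hm; omega)
    have h := succ_mul_meanOnlineDom_range n
    rw [hsum, ← succ_mul_onlineDomFormula] at h
    exact mul_left_cancel₀ (by positivity) h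

theorem expected_online_domination_closed_form (n : ℕ) :
    gammaOPath n = ((n : ℝ) + 1) / 2 -
      (1 / 2) * ∑ j ∈ Finset.range (n + 1),
        ((n : ℝ) + 1 - (j : ℝ)) * (-2 : ℝ) ^ j / (Nat.factorial j) := by
  rw [gammaOPath_eq_meanOnlineDom, meanOnlineDom_range, onlineDomFormula_eq]
end

section
/- For every integer n ≥ 3, the expected online domination number of the cycle graph C_n on n vertices satisfies γ_o(C_n) = 1 + γ_o(P_{n−3}). -/
/- `γ_o(G)`: the expected size of the dominating set produced by the online domination
   algorithm on `G`, when the vertices are revealed in a uniformly random order. -/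
noncomputable def gammaO {V : Type*} [Fintype V] [DecidableEq V] (G : SimpleGraph V) : ℝ :=
  (∑ e : Fin (Fintype.card V) ≃ V, ((domList G (List.ofFn fun i => e i)).card : ℝ)) /
    Nat.factorial (Fintype.card V)

/- The cycle graph `C n` on `Fin n`. -/
def cycleGraph (n : ℕ) : SimpleGraph (Fin n) where
  Adj i j := i ≠ j ∧ (((i : ℕ) + 1) % n = j ∨ ((j : ℕ) + 1) % n = i)
  symm := ⟨fun i j h => ⟨h.1.symm, h.2.symm⟩⟩
  loopless := ⟨fun i h => h.1 rfl⟩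

/-! Whichever vertex `u` of `C_n` is revealed first joins `D`, and its two neighbours can then
never join. The other `n - 3` vertices induce a copy of `P_{n-3}` none of whose vertices is
adjacent to `u`, so on them the algorithm runs exactly as on that path, in the order inherited
from the random permutation. Conditioned on the first vertex, this inherited order is uniform:
relabelling the vertices of the copy permutes the possible orders transitively and fixes `u`.
The argument applies to any graph `G` all of whose subgraphs `G - N[u]` are induced copies of
one graph `H`, and gives `γ_o(G) = 1 + γ_o(H)`. -/

open Finset Function

theorem Function.partialInv_eq_none_of_notMem_range {α β : Type*} {f : α → β} {b : β}
    (h : b ∉ Set.range f) : partialInv f b = none :=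
  dif_neg h

section DomStep

variable {V W : Type*} [DecidableEq V] [DecidableEq W] {G : SimpleGraph V} {H : SimpleGraph W}

open Classical in
noncomputable def domStep (G : SimpleGraph V) (D : Finset V) (v : V) : Finset V :=
  if ∃ w ∈ D, G.Adj w v then D else insert v D

theorem domList_eq_foldl (G : SimpleGraph V) (l : List V) :
    domList G l = l.foldl (domStep G) ∅ := rfl

theorem domStep_of_mem_or_adj {D : Finset V} {v : V} (h : v ∈ D ∨ ∃ w ∈ D, G.Adj w v) :
    domStep G D v = D := by
  unfold domStep
  split_ifs with hadj
  · rfl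
  · exact insert_eq_of_mem (h.resolve_right hadj)

theorem domStep_insert_map (φ : H ↪g G) {u : V} (hu : ∀ k, ¬G.Adj u (φ k)) (D : Finset W)
    (k : W) :
    domStep G (insert u (D.map φ.toEmbedding)) (φ k) =
      insert u ((domStep H D k).map φ.toEmbedding) := by
  have hadj : (∃ w ∈ insert u (D.map φ.toEmbedding), G.Adj w (φ k)) ↔ ∃ j ∈ D, H.Adj j k := by
    simp [hu]
  unfold domStep
  by_cases h : ∃ j ∈ D, H.Adj j k
  · rw [if_pos (hadj.mpr h), if_pos h]
  · rw [if_neg (mt hadj.mp h), if_neg h, map_insert, insert_comm]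
    rfl

theorem foldl_domStep_insert_map (φ : H ↪g G) {u : V}
    (hφ : ∀ v, v ∉ Set.range φ ↔ v = u ∨ G.Adj u v) (l : List V) (D : Finset W) :
    l.foldl (domStep G) (insert u (D.map φ.toEmbedding)) =
      insert u (((l.filterMap (partialInv φ)).foldl (domStep H) D).map φ.toEmbedding) := by
  induction l generalizing D with
  | nil => rfl
  | cons v l ih =>
    by_cases hv : v ∈ Set.range φ
    · obtain ⟨k, rfl⟩ := hv
      have hu : ∀ j, ¬G.Adj u (φ j) := fun j h => (hφ (φ j)).mpr (Or.inr h) ⟨j, rfl⟩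
      rw [List.filterMap_cons_some (partialInv_left φ.injective k), List.foldl_cons,
        List.foldl_cons, domStep_insert_map φ hu, ih]
    · rw [List.filterMap_cons_none (partialInv_eq_none_of_notMem_range hv), List.foldl_cons,
        domStep_of_mem_or_adj, ih]
      rcases (hφ v).mp hv with rfl | hadj
      · exact Or.inl (mem_insert_self _ _)
      · exact Or.inr ⟨u, mem_insert_self _ _, hadj⟩

theorem card_domList_cons (φ : H ↪g G) {u : V}
    (hφ : ∀ v, v ∉ Set.range φ ↔ v = u ∨ G.Adj u v) (l : List V) :
    #(domList G (u :: l)) = #(domList H ((u :: l).filterMap (partialInv φ))) + 1 := by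
  have hu : u ∉ Set.range φ := (hφ u).mpr (Or.inl rfl)
  have h := foldl_domStep_insert_map φ hφ l ∅
  rw [map_empty] at h
  rw [domList_eq_foldl, domList_eq_foldl, List.foldl_cons,
    List.filterMap_cons_none (partialInv_eq_none_of_notMem_range hu), domStep, if_neg (by simp),
    h, card_insert_of_notMem, card_map]
  rw [mem_map]
  rintro ⟨k, -, hk⟩
  exact hu ⟨k, hk⟩

end DomStep

theorem List.Nodup.exists_ofFn_eq {W : Type*} [Fintype W] [DecidableEq W] {l : List W}
    (hl : l.Nodup) (hmem : ∀ w, w ∈ l) : ∃ τ : Fin (Fintype.card W) ≃ W, List.ofFn τ = l := by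
  have hlen : l.length = Fintype.card W := by
    simpa using Fintype.card_congr (hl.getEquivOfForallMemList l hmem)
  exact ⟨(finCongr hlen.symm).trans (hl.getEquivOfForallMemList l hmem),
    (List.ofFn_congr hlen l.get).symm.trans (List.ofFn_get l)⟩

section InducedOrder

variable {V W : Type*} {k : ℕ}

noncomputable def inducedOrder (ι : W ↪ V) (σ : Fin k ≃ V) : List W :=
  (List.ofFn σ).filterMap (partialInv ι)

theorem exists_ofFn_eq_inducedOrder [Fintype W] [DecidableEq W] (ι : W ↪ V) (σ : Fin k ≃ V) :
    ∃ τ : Fin (Fintype.card W) ≃ W, List.ofFn τ = inducedOrder ι σ := by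
  refine List.Nodup.exists_ofFn_eq ?_ fun w => ?_
  · refine (List.nodup_ofFn.mpr σ.injective).filterMap fun a a' b ha ha' => ?_
    rw [Option.mem_def, ι.injective.isPartialInv] at ha ha'
    exact ha.symm.trans ha'
  · exact List.mem_filterMap.mpr ⟨ι w, List.mem_ofFn.mpr ⟨σ.symm (ι w), by simp⟩,
      partialInv_left ι.injective w⟩

theorem partialInv_viaFintypeEmbedding [Fintype W] [DecidableEq V] (ι : W ↪ V)
    (π : Equiv.Perm W) (v : V) :
    partialInv ι (π.viaFintypeEmbedding ι v) = (partialInv ι v).map π := by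
  by_cases hv : v ∈ Set.range ι
  · obtain ⟨w, rfl⟩ := hv
    rw [Equiv.Perm.viaFintypeEmbedding_apply_image, partialInv_left ι.injective,
      partialInv_left ι.injective, Option.map_some]
  · rw [Equiv.Perm.viaFintypeEmbedding_apply_notMem_range _ _ hv,
      partialInv_eq_none_of_notMem_range hv, Option.map_none]

theorem inducedOrder_trans_viaFintypeEmbedding [Fintype W] [DecidableEq V] (ι : W ↪ V)
    (σ : Fin k ≃ V) (π : Equiv.Perm W) :
    inducedOrder ι (σ.trans (π.viaFintypeEmbedding ι)) = (inducedOrder ι σ).map π := by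
  simp only [inducedOrder, Equiv.coe_trans, ← List.map_ofFn, List.filterMap_map,
    List.map_filterMap]
  congr 1
  funext v
  exact partialInv_viaFintypeEmbedding ι π v

variable [Fintype V] [Fintype W] [DecidableEq V] [DecidableEq W]

theorem card_filter_inducedOrder_eq (ι : W ↪ V) (i : Fin k) {v : V} (hv : v ∉ Set.range ι)
    (τ τ' : Fin (Fintype.card W) ≃ W) :
    #{σ | σ i = v ∧ inducedOrder ι σ = List.ofFn τ} =
      #{σ | σ i = v ∧ inducedOrder ι σ = List.ofFn τ'} := by
  have hmaps : ∀ (π : Equiv.Perm W) (τ : Fin (Fintype.card W) ≃ W) (σ : Fin k ≃ V),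
      σ i = v ∧ inducedOrder ι σ = List.ofFn τ →
        (σ.trans (π.viaFintypeEmbedding ι)) i = v ∧
          inducedOrder ι (σ.trans (π.viaFintypeEmbedding ι)) = List.ofFn (τ.trans π) := by
    rintro π τ σ ⟨hσi, hσ⟩
    refine ⟨?_, ?_⟩
    · rw [Equiv.trans_apply, hσi, Equiv.Perm.viaFintypeEmbedding_apply_notMem_range _ _ hv]
    · rw [inducedOrder_trans_viaFintypeEmbedding, hσ, List.map_ofFn]
      rfl
  have hinv : ∀ (π : Equiv.Perm W) (σ : Fin k ≃ V),
      (σ.trans (π.viaFintypeEmbedding ι)).trans (π⁻¹.viaFintypeEmbedding ι) = σ := by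
    intro π σ
    ext j
    by_cases hj : σ j ∈ Set.range ι
    · obtain ⟨w, hw⟩ := hj
      simp [← hw]
    · simp [Equiv.Perm.viaFintypeEmbedding_apply_notMem_range _ _ hj]
  set π : Equiv.Perm W := τ.symm.trans τ'
  have hτ' : τ.trans π = τ' := by ext; simp [π]
  have hτ : τ'.trans π⁻¹ = τ := by ext; simp [π]
  refine card_nbij' (fun σ => σ.trans (π.viaFintypeEmbedding ι))
    (fun σ => σ.trans (π⁻¹.viaFintypeEmbedding ι)) ?_ ?_ ?_ ?_
  · intro σ hσ
    simpa [hτ'] using hmaps π τ σ (by simpa using hσ)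
  · intro σ hσ
    simpa [hτ] using hmaps π⁻¹ τ' σ (by simpa using hσ)
  · exact fun σ _ => hinv π σ
  · intro σ _
    simpa using hinv π⁻¹ σ

theorem sum_filter_inducedOrder {M : Type*} [AddCommMonoid M] (ι : W ↪ V) (i : Fin k) {v : V}
    (hv : v ∉ Set.range ι) (τ₀ : Fin (Fintype.card W) ≃ W) (g : List W → M) :
    ∑ σ with σ i = v, g (inducedOrder ι σ) =
      #{σ | σ i = v ∧ inducedOrder ι σ = List.ofFn τ₀} •
        ∑ τ : Fin (Fintype.card W) ≃ W, g (List.ofFn τ) := by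
  have hmaps : ∀ σ ∈ ({σ | σ i = v} : Finset (Fin k ≃ V)),
      inducedOrder ι σ ∈ univ.image fun τ : Fin (Fintype.card W) ≃ W => List.ofFn τ := by
    intro σ _
    simpa using exists_ofFn_eq_inducedOrder ι σ
  rw [← sum_fiberwise_of_maps_to hmaps,
    sum_image fun τ _ τ' _ h => DFunLike.coe_injective (List.ofFn_injective h), smul_sum]
  refine sum_congr rfl fun τ _ => ?_
  rw [sum_congr rfl fun σ hσ => by rw [(mem_filter.mp hσ).2], sum_const, filter_filter,
    card_filter_inducedOrder_eq ι i hv τ τ₀]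

theorem factorial_smul_sum_filter_inducedOrder {M : Type*} [AddCommMonoid M] (ι : W ↪ V)
    (i : Fin k) {v : V} (hv : v ∉ Set.range ι) (g : List W → M) :
    (Fintype.card W).factorial • ∑ σ with σ i = v, g (inducedOrder ι σ) =
      #{σ : Fin k ≃ V | σ i = v} • ∑ τ : Fin (Fintype.card W) ≃ W, g (List.ofFn τ) := by
  have hcard := sum_filter_inducedOrder ι i hv (Fintype.equivFin W).symm fun _ => 1
  simp only [sum_const, card_univ, Fintype.card_equiv (Fintype.equivFin W).symm,
    Fintype.card_fin, smul_eq_mul, mul_one] at hcard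
  rw [sum_filter_inducedOrder ι i hv (Fintype.equivFin W).symm g, hcard, smul_smul, mul_comm]

theorem factorial_smul_sum_inducedOrder {M : Type*} [AddCommMonoid M] (ι : V → W ↪ V)
    (hι : ∀ v, v ∉ Set.range (ι v)) (i : Fin k) (g : List W → M) :
    (Fintype.card W).factorial • ∑ σ : Fin k ≃ V, g (inducedOrder (ι (σ i)) σ) =
      Fintype.card (Fin k ≃ V) • ∑ τ : Fin (Fintype.card W) ≃ W, g (List.ofFn τ) := by
  rw [← sum_fiberwise univ (fun σ : Fin k ≃ V => σ i), smul_sum]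
  calc ∑ v, (Fintype.card W).factorial • ∑ σ with σ i = v, g (inducedOrder (ι (σ i)) σ)
      = ∑ v, #{σ : Fin k ≃ V | σ i = v} • ∑ τ : Fin (Fintype.card W) ≃ W, g (List.ofFn τ) := by
        refine sum_congr rfl fun v _ => ?_
        rw [sum_congr rfl fun σ hσ => by rw [(mem_filter.mp hσ).2]]
        exact factorial_smul_sum_filter_inducedOrder (ι v) i (hι v) g
    _ = Fintype.card (Fin k ≃ V) • ∑ τ : Fin (Fintype.card W) ≃ W, g (List.ofFn τ) := by
        rw [← sum_smul, ← card_eq_sum_card_fiberwise fun σ _ => mem_univ _, card_univ]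

end InducedOrder

section GammaO

variable {V W : Type*} [Fintype V] [Fintype W] [DecidableEq V] [DecidableEq W]

theorem gammaO_eq_sum_div {k : ℕ} (G : SimpleGraph V) (hk : Fintype.card V = k) :
    gammaO G = (∑ σ : Fin k ≃ V, (#(domList G (List.ofFn σ)) : ℝ)) / k.factorial := by
  subst hk
  rfl

theorem gammaO_eq_one_add_of_forall_embedding [Nonempty V] {G : SimpleGraph V}
    {H : SimpleGraph W} (φ : V → H ↪g G) (hφ : ∀ u v, v ∉ Set.range (φ u) ↔ v = u ∨ G.Adj u v) :
    gammaO G = 1 + gammaO H := by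
  obtain ⟨m, hm⟩ := Nat.exists_eq_add_one_of_ne_zero (Fintype.card_ne_zero (α := V))
  have hcard (σ : Fin (m + 1) ≃ V) : (#(domList G (List.ofFn σ)) : ℝ) =
      1 + #(domList H (inducedOrder (φ (σ 0)).toEmbedding σ)) := by
    rw [inducedOrder, List.ofFn_succ, card_domList_cons (φ (σ 0)) (hφ (σ 0))]
    push_cast
    rw [add_comm]
    rfl
  have hperm : Fintype.card (Fin (m + 1) ≃ V) = (m + 1).factorial := by
    rw [Fintype.card_equiv ((finCongr hm.symm).trans (Fintype.equivFin V).symm), Fintype.card_fin]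
  have hsum := factorial_smul_sum_inducedOrder (fun v => (φ v).toEmbedding)
    (fun v => (hφ v v).mpr (Or.inl rfl)) (0 : Fin (m + 1)) fun l => (#(domList H l) : ℝ)
  rw [hperm, nsmul_eq_mul, nsmul_eq_mul] at hsum
  rw [gammaO_eq_sum_div G hm, gammaO, sum_congr rfl fun σ _ => hcard σ, sum_add_distrib,
    sum_const, card_univ, hperm, nsmul_eq_mul, mul_one]
  have hfact : ((m + 1).factorial : ℝ) ≠ 0 := by positivity
  have hfactW : ((Fintype.card W).factorial : ℝ) ≠ 0 := by positivity
  field_simp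
  linear_combination hsum

end GammaO

section Cycle

variable {N : ℕ}

theorem cycleGraph_adj_iff (a b : Fin (N + 2)) :
    (cycleGraph (N + 2)).Adj a b ↔ a + 1 = b ∨ b + 1 = a := by
  have hval (x y : Fin (N + 2)) : x + 1 = y ↔ ((x : ℕ) + 1) % (N + 2) = y := by
    rw [Fin.ext_iff, Fin.val_add, Fin.val_one]
  have hne (x : Fin (N + 2)) : x + 1 ≠ x := by simp
  change a ≠ b ∧ _ ↔ _
  rw [← hval, ← hval]
  constructor
  · exact And.right
  · rintro (h | h)
    · exact ⟨fun hab => hne a (hab ▸ h), Or.inl h⟩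
    · exact ⟨fun hab => hne b (hab ▸ h), Or.inr h⟩

theorem cycleGraph_adj_add_left (v a b : Fin (N + 2)) :
    (cycleGraph (N + 2)).Adj (v + a) (v + b) ↔ (cycleGraph (N + 2)).Adj a b := by
  simp only [cycleGraph_adj_iff, add_assoc, add_right_inj]

theorem Fin.add_one_eq_iff_val (a b : Fin (N + 2)) :
    a + 1 = b ↔ (a : ℕ) + 1 = b ∨ (a : ℕ) = N + 1 ∧ (b : ℕ) = 0 := by
  rw [Fin.ext_iff, Fin.val_add_eq_ite, Fin.val_one]
  have := a.isLt
  split_ifs <;> omega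

def pathIntoCycle (N : ℕ) (v : Fin (N + 3)) : pathGraph N ↪g cycleGraph (N + 3) where
  toFun k := v + (⟨k + 2, by have := k.isLt; omega⟩ : Fin (N + 3))
  inj' j k h := Fin.ext (by simpa using congrArg Fin.val (add_left_cancel h))
  map_rel_iff' {j k} := by
    change (cycleGraph (N + 3)).Adj (v + _) (v + _) ↔ (j : ℕ) + 1 = k ∨ (k : ℕ) + 1 = j
    rw [cycleGraph_adj_add_left, cycleGraph_adj_iff, Fin.add_one_eq_iff_val, Fin.add_one_eq_iff_val]
    dsimp only
    omega

theorem notMem_range_pathIntoCycle_iff (v w : Fin (N + 3)) :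
    w ∉ Set.range (pathIntoCycle N v) ↔ w = v ∨ (cycleGraph (N + 3)).Adj v w := by
  obtain ⟨y, rfl⟩ : ∃ y, w = v + y := ⟨w - v, by abel⟩
  have hrange : v + y ∈ Set.range (pathIntoCycle N v) ↔ 2 ≤ (y : ℕ) ∧ (y : ℕ) ≤ N + 1 := by
    change (∃ k : Fin N, v + _ = v + y) ↔ _
    simp only [add_right_inj, Fin.ext_iff]
    exact ⟨fun ⟨k, hk⟩ => by omega, fun h => ⟨⟨y - 2, by omega⟩, by dsimp only; omega⟩⟩
  have hadj : (cycleGraph (N + 3)).Adj v (v + y) ↔ (cycleGraph (N + 3)).Adj 0 y := by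
    simpa using cycleGraph_adj_add_left v 0 y
  rw [hrange, add_eq_left, hadj, cycleGraph_adj_iff,
    Fin.add_one_eq_iff_val, Fin.add_one_eq_iff_val, Fin.ext_iff]
  simp only [Fin.val_zero, and_true]
  have := y.isLt
  omega

end Cycle

theorem gammaO_cycle (n : ℕ) (hn : 3 ≤ n) :
    gammaO (cycleGraph n) = 1 + gammaO (pathGraph (n - 3)) := by
  obtain ⟨N, rfl⟩ : ∃ N, n = N + 3 := ⟨n - 3, by omega⟩
  rw [Nat.add_sub_cancel]
  exact gammaO_eq_one_add_of_forall_embedding (pathIntoCycle N) notMem_range_pathIntoCycle_iff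
end

section
/- For the complete multipartite graph with parts of sizes p_1, ..., p_k (each p_i ≥ 1, k ≥ 1), the expected online domination number equals γ_o(K_{p_1,...,p_k}) = (Σ_{i=1}^k p_i²)/(Σ_{i=1}^k p_i). -/
/- The complete multipartite graph with parts of sizes `p 0, ..., p (k-1)`: vertices in
   different blocks are adjacent, vertices in the same block are not. -/
def completeMultipartite {k : ℕ} (p : Fin k → ℕ) : SimpleGraph (Σ i : Fin k, Fin (p i)) where
  Adj u v := u.1 ≠ v.1
  symm := ⟨fun u v h => h.symm⟩
  loopless := ⟨fun u h => h rfl⟩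

/-! In a complete multipartite graph the first revealed vertex `v` enters `D`; afterwards a
vertex is dominated exactly when it lies outside the block of `v`, so `D` is that block and
`|D| = p_i` for `v` in block `i`. The first vertex of a uniform ordering is uniform, hence
`γ_o = (∑_v p_{block v}) / n = (∑ p_i²) / (∑ p_i)`. -/

theorem Fintype.card_nsmul_sum_equiv_apply {α V M : Type*} [Fintype α] [DecidableEq α]
    [Fintype V] [DecidableEq V] [AddCommMonoid M] (f : V → M) (a : α) :
    Fintype.card α • ∑ e : α ≃ V, f (e a) = Fintype.card (α ≃ V) • ∑ v, f v := by
  -- Precomposing with `swap a b` shows that the sum does not depend on the evaluation point.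
  have sum_apply_eq (b : α) : ∑ e : α ≃ V, f (e a) = ∑ e : α ≃ V, f (e b) :=
    Fintype.sum_equiv ((Equiv.swap a b).equivCongr (Equiv.refl V)) _ _ fun e => by simp
  calc Fintype.card α • ∑ e : α ≃ V, f (e a)
      = ∑ b : α, ∑ e : α ≃ V, f (e b) := by
        rw [← Finset.card_univ, ← Finset.sum_const]
        exact Finset.sum_congr rfl fun b _ => sum_apply_eq b
    _ = ∑ e : α ≃ V, ∑ b : α, f (e b) := Finset.sum_comm
    _ = ∑ _e : α ≃ V, ∑ v, f v := Finset.sum_congr rfl fun e _ => e.sum_comp f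
    _ = Fintype.card (α ≃ V) • ∑ v, f v := by rw [Finset.sum_const, Finset.card_univ]

theorem gammaO_eq_sum_div_card {V : Type*} [Fintype V] [DecidableEq V] (G : SimpleGraph V)
    (f : V → ℝ)
    (hf : ∀ v l, (∀ u, u ∈ v :: l) → ((domList G (v :: l)).card : ℝ) = f v) :
    gammaO G = (∑ v, f v) / Fintype.card V := by
  unfold gammaO
  cases hV : Fintype.card V with
  | zero =>
    -- both sides vanish, the right one through `x / 0 = 0`
    have : IsEmpty V := Fintype.card_eq_zero_iff.mp hV
    simp [Finset.eq_empty_of_isEmpty]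
  | succ n =>
    have first (e : Fin (n + 1) ≃ V) :
        ((domList G (List.ofFn fun i => e i)).card : ℝ) = f (e 0) := by
      rw [List.ofFn_succ]
      refine hf _ _ fun u => ?_
      rw [← List.ofFn_succ, List.mem_ofFn']
      exact e.surjective u
    have average := Fintype.card_nsmul_sum_equiv_apply f (0 : Fin (n + 1))
    rw [Fintype.card_fin, Fintype.card_equiv (Fintype.equivFinOfCardEq hV).symm,
      Fintype.card_fin, nsmul_eq_mul, nsmul_eq_mul, Nat.factorial_succ, Nat.cast_mul,
      mul_assoc] at average
    rw [Finset.sum_congr rfl fun e _ => first e,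
      mul_left_cancel₀ (by positivity) average, Nat.factorial_succ]
    push_cast
    field_simp

section CompleteMultipartite

variable {k : ℕ} {p : Fin k → ℕ}

theorem card_filter_fst_eq (i : Fin k) :
    (Finset.univ.filter fun u : Σ i, Fin (p i) => u.1 = i).card = p i := by
  rw [Finset.card_filter, Fintype.sum_sigma, Finset.sum_eq_single i] <;> simp_all

open Classical in
theorem foldl_completeMultipartite {i : Fin k} (l : List (Σ i, Fin (p i)))
    {D : Finset (Σ i, Fin (p i))} (hD : D.Nonempty) (hDi : ∀ w ∈ D, w.1 = i) :
    l.foldl (fun D v => if ∃ w ∈ D, (completeMultipartite p).Adj w v then D else insert v D) D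
      = D ∪ (l.filter (·.1 = i)).toFinset := by
  induction l generalizing D with
  | nil => simp
  | cons v l ih =>
    by_cases hv : v.1 = i
    · have free : ¬ ∃ w ∈ D, (completeMultipartite p).Adj w v := fun ⟨w, hw, hadj⟩ =>
        hadj ((hDi w hw).trans hv.symm)
      rw [List.foldl_cons, if_neg free,
        ih (Finset.insert_nonempty v D) (by simpa [hv] using hDi)]
      simp [hv, Finset.insert_union, Finset.union_insert]
    · obtain ⟨w, hw⟩ := hD
      have dominated : ∃ w ∈ D, (completeMultipartite p).Adj w v :=
        ⟨w, hw, fun h => hv (h.symm.trans (hDi w hw))⟩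
      rw [List.foldl_cons, if_pos dominated, ih ⟨w, hw⟩ hDi]
      simp [hv]

theorem domList_completeMultipartite_cons (v : Σ i, Fin (p i)) (l : List (Σ i, Fin (p i))) :
    domList (completeMultipartite p) (v :: l) = ((v :: l).filter (·.1 = v.1)).toFinset := by
  rw [domList, List.foldl_cons, if_neg (by simp),
    foldl_completeMultipartite (i := v.1) l (Finset.insert_nonempty v ∅) (by simp)]
  simp

theorem card_domList_completeMultipartite_cons (v : Σ i, Fin (p i))
    (l : List (Σ i, Fin (p i))) (hl : ∀ u, u ∈ v :: l) :
    (domList (completeMultipartite p) (v :: l)).card = p v.1 := by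
  rw [domList_completeMultipartite_cons, ← card_filter_fst_eq (p := p) v.1]
  congr 1
  ext u
  simp only [List.mem_toFinset, List.mem_filter, Finset.mem_filter, Finset.mem_univ, hl u,
    true_and, decide_eq_true_eq]

end CompleteMultipartite

theorem gammaO_completeMultipartite_general (k : ℕ) (p : Fin k → ℕ) :
    gammaO (completeMultipartite p) =
      (∑ i : Fin k, (p i : ℝ) ^ 2) / (∑ i : Fin k, (p i : ℝ)) := by
  rw [gammaO_eq_sum_div_card _ (fun v => (p v.1 : ℝ))
    fun v l hl => by rw [card_domList_completeMultipartite_cons v l hl]]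
  simp [Fintype.sum_sigma, Fintype.card_sigma, sq]

theorem gammaO_completeMultipartite (k : ℕ) (hk : 1 ≤ k) (p : Fin k → ℕ)
    (hp : ∀ i, 1 ≤ p i) :
    gammaO (completeMultipartite p) =
      (∑ i : Fin k, (p i : ℝ) ^ 2) / (∑ i : Fin k, (p i : ℝ)) :=
  gammaO_completeMultipartite_general k p
end

section
/- For every integer n ≥ 1, the number of independent dominating sets of the path P_n having the maximum possible size ⌈n/2⌉ equals n/2 + 1 if n is even, and equals 1 if n is odd. -/
/- `S` is an independent dominating set of `P n`. -/
def IsIndepDomSet (n : ℕ) (S : Finset (Fin n)) : Prop :=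
  (∀ u ∈ S, ∀ v ∈ S, ¬ (pathGraph n).Adj u v) ∧
  (∀ v : Fin n, v ∈ S ∨ ∃ u ∈ S, (pathGraph n).Adj u v)

open Finset

namespace SimpleGraph

variable {V : Type*} {G : SimpleGraph V}

theorem isIndepSet_iff_forall_not_adj {s : Set V} :
    G.IsIndepSet s ↔ ∀ u ∈ s, ∀ v ∈ s, ¬G.Adj u v :=
  ⟨fun h _ hu _ hv huv => h hu hv huv.ne huv, fun h _ hu _ hv _ => h _ hu _ hv⟩

theorem mem_or_exists_adj_of_maximal_isIndepSet {s : Set V} (hs : Maximal G.IsIndepSet s)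
    (v : V) : v ∈ s ∨ ∃ u ∈ s, G.Adj u v := by
  by_contra! h
  obtain ⟨hv, hnadj⟩ := h
  have hins : G.IsIndepSet (insert v s) :=
    hs.prop.insert fun u hu _ => ⟨fun huv => hnadj u hu huv.symm, hnadj u hu⟩
  exact hv (hs.le_of_ge hins (Set.subset_insert v s) (Set.mem_insert v s))

end SimpleGraph

def switchPoints (n : ℕ) : Finset ℕ :=
  if n % 2 = 0 then range (n / 2 + 1) else {(n + 1) / 2}

theorem mem_switchPoints {n k : ℕ} :
    k ∈ switchPoints n ↔ 2 * k ≤ n + 1 ∧ (n % 2 = 1 → n < 2 * k) := by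
  unfold switchPoints
  split_ifs <;> simp only [mem_range, mem_singleton] <;> omega

theorem card_switchPoints (n : ℕ) :
    #(switchPoints n) = if n % 2 = 0 then n / 2 + 1 else 1 := by
  unfold switchPoints
  split_ifs <;> simp

section LabelPattern

variable {p : ℕ → Prop} {n : ℕ}

theorem two_mul_of_two_mul_of_le (hlt : ∀ a, p a → a < n) (hsep : ∀ a, p a → ¬p (a + 1))
    (hcover : ∀ i, 2 * i < n → p (2 * i) ∨ p (2 * i + 1)) {i j : ℕ} (hij : i ≤ j)
    (hj : p (2 * j)) : p (2 * i) := by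
  induction j, hij using Nat.le_induction with
  | base => exact hj
  | succ j _ ih =>
    refine ih ((hcover j (by have := hlt _ hj; omega)).resolve_right fun hodd => ?_)
    exact hsep _ hodd (by rwa [show 2 * j + 1 + 1 = 2 * (j + 1) by ring])

theorem exists_mem_switchPoints_forall_iff (hlt : ∀ a, p a → a < n)
    (hsep : ∀ a, p a → ¬p (a + 1))
    (hcover : ∀ i, 2 * i < n → p (2 * i) ∨ p (2 * i + 1)) :
    ∃ k ∈ switchPoints n, ∀ a, p a ↔ a < n ∧ a % 2 = if a < 2 * k then 0 else 1 := by
  classical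
  have hex : ∃ i, ¬p (2 * i) := ⟨n, fun h => by have := hlt _ h; omega⟩
  set k := Nat.find hex
  have heven : ∀ i, p (2 * i) ↔ i < k := fun i =>
    ⟨fun h => by_contra fun hi => Nat.find_spec hex
        (two_mul_of_two_mul_of_le hlt hsep hcover (not_lt.1 hi) h),
      fun hi => not_not.1 (Nat.find_min hex hi)⟩
  have hodd : ∀ i, p (2 * i + 1) ↔ 2 * i + 1 < n ∧ k ≤ i := fun i =>
    ⟨fun h => ⟨hlt _ h, not_lt.1 fun hi => hsep _ ((heven i).2 hi) h⟩,
      fun ⟨hi, hki⟩ => (hcover i (by omega)).resolve_left fun h => by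
        have := (heven i).1 h; omega⟩
  have hchar : ∀ a, p a ↔ a < n ∧ a % 2 = if a < 2 * k then 0 else 1 := by
    intro a
    obtain ⟨i, rfl | rfl⟩ := Nat.even_or_odd' a
    · rw [heven]
      refine ⟨fun hi => ⟨hlt _ ((heven i).2 hi), ?_⟩, fun ⟨_, h⟩ => ?_⟩
      · split_ifs <;> omega
      · split_ifs at h <;> omega
    · rw [hodd]
      split_ifs <;> omega
  refine ⟨k, mem_switchPoints.2 ⟨?_, fun hn => ?_⟩, hchar⟩
  · have : k ≤ (n + 1) / 2 := Nat.find_min' hex fun h => by have := hlt _ h; omega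
    omega
  · have hlast : p (2 * (n / 2)) :=
      (hcover (n / 2) (by omega)).resolve_right fun h => by have := hlt _ h; omega
    have := ((hchar _).1 hlast).2
    split_ifs at this <;> omega

end LabelPattern

namespace pathGraph

variable {n : ℕ}

theorem adj_of_div_two_eq {u v : Fin n} (huv : u ≠ v) (h : (u : ℕ) / 2 = v / 2) :
    (pathGraph n).Adj u v := by
  have := Fin.val_ne_of_ne huv
  show _ ∨ _
  omega

theorem injOn_div_two {s : Set (Fin n)} (hs : (pathGraph n).IsIndepSet s) :
    s.InjOn fun v : Fin n => (v : ℕ) / 2 :=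
  fun _ hu _ hv h => by_contra fun huv => hs hu hv huv (adj_of_div_two_eq huv h)

theorem image_div_two_subset_range (S : Finset (Fin n)) :
    S.image (fun v : Fin n => (v : ℕ) / 2) ⊆ range ((n + 1) / 2) := by
  intro i hi
  obtain ⟨v, -, rfl⟩ := mem_image.1 hi
  have := v.isLt
  rw [mem_range]
  omega

theorem card_le_of_isIndepSet {S : Finset (Fin n)} (hS : (pathGraph n).IsIndepSet S) :
    #S ≤ (n + 1) / 2 := by
  rw [← card_image_of_injOn (injOn_div_two hS), ← card_range ((n + 1) / 2)]
  exact card_le_card (image_div_two_subset_range S)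

theorem card_eq_iff_forall_exists_div_two_eq {S : Finset (Fin n)}
    (hS : (pathGraph n).IsIndepSet S) :
    #S = (n + 1) / 2 ↔ ∀ i < (n + 1) / 2, ∃ v ∈ S, (v : ℕ) / 2 = i := by
  rw [← card_image_of_injOn (injOn_div_two hS)]
  refine ⟨fun h i hi => ?_, fun h => ?_⟩
  · have himage := eq_of_subset_of_card_le (image_div_two_subset_range S) (by simp [h])
    rw [← mem_range, ← himage] at hi
    simpa using hi
  · rw [(image_div_two_subset_range S).antisymm fun i hi => by simpa using h i (mem_range.1 hi),
      card_range]

theorem maximal_isIndepSet_of_card_eq {S : Finset (Fin n)} (hS : (pathGraph n).IsIndepSet S)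
    (hcard : #S = (n + 1) / 2) : Maximal (pathGraph n).IsIndepSet (S : Set (Fin n)) :=
  SimpleGraph.IsMaximumIndepSet.isMaximalIndepSet S
    ⟨hS, fun _ ht => hcard ▸ card_le_of_isIndepSet ht⟩

end pathGraph

def switchSet (n k : ℕ) : Finset (Fin n) :=
  {v | (v : ℕ) % 2 = if (v : ℕ) < 2 * k then 0 else 1}

theorem mem_switchSet {n k : ℕ} {v : Fin n} :
    v ∈ switchSet n k ↔ (v : ℕ) % 2 = if (v : ℕ) < 2 * k then 0 else 1 := by
  simp [switchSet]

theorem isIndepSet_switchSet (n k : ℕ) :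
    (pathGraph n).IsIndepSet (switchSet n k : Set (Fin n)) := by
  rw [SimpleGraph.isIndepSet_iff_forall_not_adj]
  intro u hu v hv huv
  rw [mem_coe, mem_switchSet] at hu hv
  rcases huv with h | h <;> split_ifs at hu hv <;> omega

theorem card_switchSet {n k : ℕ} (hk : k ∈ switchPoints n) :
    #(switchSet n k) = (n + 1) / 2 := by
  rw [pathGraph.card_eq_iff_forall_exists_div_two_eq (isIndepSet_switchSet n k)]
  intro i hi
  rw [mem_switchPoints] at hk
  by_cases hik : i < k
  · exact ⟨⟨2 * i, by omega⟩, mem_switchSet.2 (by dsimp only; split_ifs <;> omega),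
      by dsimp only; omega⟩
  · exact ⟨⟨2 * i + 1, by omega⟩, mem_switchSet.2 (by dsimp only; split_ifs <;> omega),
      by dsimp only; omega⟩

theorem injOn_switchSet (n : ℕ) : Set.InjOn (switchSet n) (switchPoints n) := by
  intro k hk k' hk' h
  by_contra hne
  wlog hlt : k < k' generalizing k k'
  · exact this hk' hk h.symm (Ne.symm hne) (by omega)
  rw [mem_coe, mem_switchPoints] at hk'
  have hv : (⟨2 * k, by omega⟩ : Fin n) ∈ switchSet n k' :=
    mem_switchSet.2 (by dsimp only; split_ifs <;> omega)
  rw [← h, mem_switchSet] at hv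
  dsimp only at hv
  split_ifs at hv <;> omega

theorem exists_mem_switchPoints_eq_switchSet {n : ℕ} {S : Finset (Fin n)}
    (hS : (pathGraph n).IsIndepSet S) (hcard : #S = (n + 1) / 2) :
    ∃ k ∈ switchPoints n, switchSet n k = S := by
  have hblocks := (pathGraph.card_eq_iff_forall_exists_div_two_eq hS).1 hcard
  obtain ⟨k, hk, hchar⟩ := exists_mem_switchPoints_forall_iff
    (p := fun a => ∃ v ∈ S, (v : ℕ) = a) (fun _ ⟨v, _, hv⟩ => hv ▸ v.isLt)
    (fun _ ⟨u, hu, hua⟩ ⟨v, hv, hva⟩ =>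
      hS hu hv (fun huv => by subst huv; omega) (Or.inl (by omega)))
    (fun i hi => by
      obtain ⟨v, hv, hvi⟩ := hblocks i (by omega)
      obtain h | h : (v : ℕ) = 2 * i ∨ (v : ℕ) = 2 * i + 1 := by omega
      exacts [Or.inl ⟨v, hv, h⟩, Or.inr ⟨v, hv, h⟩])
  refine ⟨k, hk, ext fun v => ?_⟩
  calc v ∈ switchSet n k ↔ (v : ℕ) < n ∧ _ :=
        mem_switchSet.trans (and_iff_right v.isLt).symm
    _ ↔ ∃ w ∈ S, (w : ℕ) = v := (hchar v).symm
    _ ↔ v ∈ S := ⟨fun ⟨w, hw, hwv⟩ => Fin.ext hwv ▸ hw, fun hv => ⟨v, hv, rfl⟩⟩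

theorem isIndepDomSet_and_card_eq_iff {n : ℕ} {S : Finset (Fin n)} :
    IsIndepDomSet n S ∧ #S = (n + 1) / 2 ↔ ∃ k ∈ switchPoints n, switchSet n k = S := by
  constructor
  · rintro ⟨⟨hind, -⟩, hcard⟩
    exact exists_mem_switchPoints_eq_switchSet
      (SimpleGraph.isIndepSet_iff_forall_not_adj.2 hind) hcard
  · rintro ⟨k, hk, rfl⟩
    have hcard := card_switchSet hk
    have hmax := pathGraph.maximal_isIndepSet_of_card_eq (isIndepSet_switchSet n k) hcard
    exact ⟨⟨SimpleGraph.isIndepSet_iff_forall_not_adj.1 hmax.prop,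
      SimpleGraph.mem_or_exists_adj_of_maximal_isIndepSet hmax⟩, hcard⟩

theorem count_max_indep_dom_sets_general (n : ℕ) :
    Nat.card {S : Finset (Fin n) // IsIndepDomSet n S ∧ S.card = (n + 1) / 2} =
      if n % 2 = 0 then n / 2 + 1 else 1 := by
  calc Nat.card {S : Finset (Fin n) // IsIndepDomSet n S ∧ S.card = (n + 1) / 2}
      = Nat.card ((switchPoints n).image (switchSet n)) :=
        Nat.card_congr <| Equiv.subtypeEquivRight fun S => by
          rw [isIndepDomSet_and_card_eq_iff, mem_image]
    _ = #(switchPoints n) := by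
        rw [Nat.card_eq_finsetCard, card_image_of_injOn (injOn_switchSet n)]
    _ = if n % 2 = 0 then n / 2 + 1 else 1 := card_switchPoints n

theorem count_max_indep_dom_sets (n : ℕ) (hn : 1 ≤ n) :
    Nat.card {S : Finset (Fin n) // IsIndepDomSet n S ∧ S.card = (n + 1) / 2} =
      if n % 2 = 0 then n / 2 + 1 else 1 :=
  count_max_indep_dom_sets_general n
end

section
/- For every integer n ≥ 1, the number of worst-case permutations of even length satisfies the convolution identity |F_{2n}| = Σ_{i=0}^{n} C(2n, 2i) · D(2i) · D(2n−2i), where C(a,b) denotes the binomial coefficient. -/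
/- `f n = |F n|`: the number of worst-case permutations, i.e. permutations `π` for which
   `γ(π)` attains the maximum possible value `⌈n/2⌉`. -/
noncomputable def f (n : ℕ) : ℕ :=
  Nat.card {π : Equiv.Perm (Fin n) // gamma n π = (n + 1) / 2}

/- `D m`: the number of permutations `π ∈ S_m` for which `Γ(π)` is exactly the set of
   odd-labeled vertices `{1, 3, 5, ...}` (recall vertex `v : Fin m` has label `v + 1`). -/
noncomputable def D (m : ℕ) : ℕ :=
  Nat.card {π : Equiv.Perm (Fin m) //
    GammaSet m π = Finset.univ.filter (fun v : Fin m => ((v : ℕ) + 1) % 2 = 1)}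

/-!
The online algorithm picks a vertex exactly when no neighbour revealed earlier was picked;
this recursive description (`IsPicked`) shows that the picked set is independent and that it
can be computed locally. An independent set of `n` vertices in the path on `2n` vertices meets
each pair `{2p, 2p + 1}` exactly once, so it consists of the first vertices of the first `i`
pairs and the second vertices of the remaining ones. For such a set neither endpoint of the edge
joining the two blocks is picked, so the algorithm runs independently on the two subpaths: on
the left it must pick the odd labels, on the right the odd labels counted from the far end.
Each run only sees the relative order of the reveal times inside its block, and every pair of
relative orders is realised by `C(2n, 2i)` permutations.
-/

open Finset Equiv
open scoped Nat

section IsPicked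

variable {V : Type*} (G : SimpleGraph V) (r : V → ℕ)

/-- `IsPicked G r v`: the online algorithm picks `v` when each vertex `u` is revealed at
time `r u`. -/
def IsPicked (v : V) : Prop :=
  ∀ w, G.Adj w v → r w < r v → ¬ IsPicked w
termination_by r v
decreasing_by assumption

theorem isPicked_iff {v : V} :
    IsPicked G r v ↔ ∀ w, G.Adj w v → r w < r v → ¬ IsPicked G r w := by
  rw [IsPicked]

variable {G r}

theorem IsPicked.not_adj (hr : Function.Injective r) {v w : V} (hv : IsPicked G r v)
    (hw : IsPicked G r w) : ¬ G.Adj v w := by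
  intro hadj
  rcases lt_trichotomy (r v) (r w) with h | h | h
  · exact (isPicked_iff G r).1 hw v hadj h hv
  · exact G.ne_of_adj hadj (hr h)
  · exact (isPicked_iff G r).1 hv w hadj.symm h hw

theorem isPicked_congr_of_lt_iff {r' : V → ℕ} (h : ∀ a b, r a < r b ↔ r' a < r' b) (v : V) :
    IsPicked G r v ↔ IsPicked G r' v := by
  induction hv : r v using Nat.strong_induction_on generalizing v with
  | _ k ih =>
  subst hv
  rw [isPicked_iff, isPicked_iff]
  refine forall_congr' fun w => forall_congr' fun _ => ?_
  rw [← h]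
  exact imp_congr_right fun hlt => not_congr (ih _ hlt w rfl)

theorem isPicked_comap {V' : Type*} {G' : SimpleGraph V'} (e : G' ↪g G)
    (he : ∀ a w, G.Adj w (e a) → w ∈ Set.range e) (a : V') :
    IsPicked G' (r ∘ e) a ↔ IsPicked G r (e a) := by
  induction ha : r (e a) using Nat.strong_induction_on generalizing a with
  | _ k ih =>
  subst ha
  rw [isPicked_iff, isPicked_iff]
  constructor
  · rintro h w hw hlt
    obtain ⟨b, rfl⟩ := he a w hw
    rw [← ih _ hlt b rfl]
    exact h b (e.map_adj_iff.1 hw) hlt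
  · rintro h b hb hlt
    rw [ih _ hlt b rfl]
    exact h (e b) (e.map_adj_iff.2 hb) hlt

theorem isPicked_eq_of_le {G' : SimpleGraph V} (hle : G' ≤ G)
    (hcut : ∀ v w, G.Adj w v → ¬ G'.Adj w v → ¬ (IsPicked G r w ∧ IsPicked G' r w))
    (v : V) :
    IsPicked G r v ↔ IsPicked G' r v := by
  induction hv : r v using Nat.strong_induction_on generalizing v with
  | _ k ih =>
  subst hv
  rw [isPicked_iff, isPicked_iff]
  constructor
  · intro h w hw hlt
    rw [← ih _ hlt w rfl]
    exact h w (hle hw) hlt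
  · intro h w hw hlt
    rw [ih _ hlt w rfl]
    by_cases hw' : G'.Adj w v
    · exact h w hw' hlt
    · exact fun hw'' => hcut v w hw hw' ⟨(ih _ hlt w rfl).2 hw'', hw''⟩

theorem isPicked_iff_mem_iff_of_le {G' : SimpleGraph V} (hle : G' ≤ G) {S : Set V}
    (hS : ∀ v w, G.Adj w v → ¬ G'.Adj w v → w ∉ S) :
    (∀ v, IsPicked G r v ↔ v ∈ S) ↔ (∀ v, IsPicked G' r v ↔ v ∈ S) := by
  constructor
  · intro h v
    rw [← isPicked_eq_of_le hle (fun v w hw hw' hp => hS v w hw hw' ((h w).1 hp.1)), h]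
  · intro h v
    rw [isPicked_eq_of_le hle (fun v w hw hw' hp => hS v w hw hw' ((h w).1 hp.2)), h]

end IsPicked

open Classical in
theorem mem_domList_ofFn_iff {N : ℕ} (G : SimpleGraph (Fin N)) (π : Perm (Fin N))
    (v : Fin N) :
    v ∈ domList G (List.ofFn fun i => π i) ↔ IsPicked G (fun u => (π⁻¹ u : ℕ)) v := by
  set r : Fin N → ℕ := fun u => (π⁻¹ u : ℕ)
  set step : Finset (Fin N) → Fin N → Finset (Fin N) :=
    fun D x => if ∃ w ∈ D, G.Adj w x then D else insert x D
  have prefix_spec : ∀ k (hk : k ≤ N) (v : Fin N),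
      v ∈ ((List.ofFn fun i => π i).take k).foldl step ∅ ↔ IsPicked G r v ∧ r v < k := by
    intro k
    induction k with
    | zero => simp
    | succ k ih =>
      intro hk v
      set x := π ⟨k, hk⟩
      have hrx : ∀ u, r u = k ↔ u = x := fun u => by
        simp only [r, x, ← Equiv.Perm.inv_eq_iff_eq, Fin.ext_iff]
      set D := ((List.ofFn fun i => π i).take k).foldl step ∅
      have hD : ∀ w, w ∈ D ↔ IsPicked G r w ∧ r w < k := ih (by omega)
      have hblocked : (∃ w ∈ D, G.Adj w x) ↔ ¬ IsPicked G r x := by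
        simp only [hD, isPicked_iff G r (v := x), (hrx x).2 rfl, not_forall, not_not, exists_prop,
          and_comm, and_left_comm]
      have hstep : v ∈ step D x ↔ v ∈ D ∨ (v = x ∧ IsPicked G r x) := by
        by_cases hx : IsPicked G r x <;> simp [step, hblocked, hx, or_comm]
      rw [List.take_add_one, List.getElem?_ofFn, List.foldl_append, dif_pos (by omega : k < N),
        Option.toList_some, List.foldl_cons, List.foldl_nil, hstep, hD, Nat.lt_succ_iff_lt_or_eq,
        hrx]
      by_cases hv : v = x
      · subst hv
        simp [(hrx _).2 rfl]
      · simp [hv]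
  have := prefix_spec N le_rfl v
  rw [List.take_of_length_le (by simp), and_iff_left (π⁻¹ v).isLt] at this
  unfold domList
  -- `convert` reconciles the decidability instances of the two `if`s.
  convert this

theorem mem_GammaSet_iff {N : ℕ} (π : Perm (Fin N)) (v : Fin N) :
    v ∈ GammaSet N π ↔ IsPicked (pathGraph N) (fun u => (π⁻¹ u : ℕ)) v :=
  mem_domList_ofFn_iff _ π v

theorem isIndepSet_GammaSet {N : ℕ} (π : Perm (Fin N)) :
    (pathGraph N).IsIndepSet (GammaSet N π : Set (Fin N)) := fun v hv w hw _ =>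
  ((mem_GammaSet_iff π v).1 hv).not_adj (Fin.val_injective.comp π⁻¹.injective)
    ((mem_GammaSet_iff π w).1 hw)

section TupleSort

variable {α : Type*} [LinearOrder α] {n : ℕ} {f : Fin n → α}

theorem Tuple.sort_comp_perm (hf : Function.Injective f) (σ : Perm (Fin n)) :
    Tuple.sort (f ∘ σ) = σ⁻¹ * Tuple.sort f := by
  have h : f ∘ ⇑(σ * Tuple.sort (f ∘ σ)) = f ∘ Tuple.sort f :=
    Tuple.comp_perm_comp_sort_eq_comp_sort
  rw [eq_inv_mul_iff_mul_eq, ← DFunLike.coe_fn_eq]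
  exact hf.comp_left h

theorem Tuple.sort_inv_lt_sort_inv_iff (hf : Function.Injective f) {a b : Fin n} :
    (Tuple.sort f)⁻¹ a < (Tuple.sort f)⁻¹ b ↔ f a < f b := by
  have hmono : StrictMono (f ∘ Tuple.sort f) :=
    (Tuple.monotone_sort f).strictMono_of_injective (hf.comp (Tuple.sort f).injective)
  simpa using (hmono.lt_iff_lt (a := (Tuple.sort f)⁻¹ a) (b := (Tuple.sort f)⁻¹ b)).symm

end TupleSort

section Shuffle

variable {k m : ℕ}

def Equiv.Perm.finAddCongr (s : Perm (Fin k)) (t : Perm (Fin m)) : Perm (Fin (k + m)) :=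
  finSumFinEquiv.permCongr (s.sumCongr t)

@[simp]
theorem Equiv.Perm.finAddCongr_castAdd (s : Perm (Fin k)) (t : Perm (Fin m)) (a : Fin k) :
    s.finAddCongr t (Fin.castAdd m a) = Fin.castAdd m (s a) := by
  simp [Perm.finAddCongr, permCongr_apply]

@[simp]
theorem Equiv.Perm.finAddCongr_natAdd (s : Perm (Fin k)) (t : Perm (Fin m)) (b : Fin m) :
    s.finAddCongr t (Fin.natAdd k b) = Fin.natAdd k (t b) := by
  simp [Perm.finAddCongr, permCongr_apply]

/-- The sorting permutations of the two blocks of `ρ`; each one records exactly the relative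
order of the values of `ρ` on its block. -/
def blockPatterns (ρ : Perm (Fin (k + m))) : Perm (Fin k) × Perm (Fin m) :=
  (Tuple.sort (ρ ∘ Fin.castAdd m), Tuple.sort (ρ ∘ Fin.natAdd k))

theorem blockPatterns_mul_finAddCongr (ρ : Perm (Fin (k + m))) (s : Perm (Fin k))
    (t : Perm (Fin m)) :
    blockPatterns (ρ * s.finAddCongr t) =
      (s⁻¹ * (blockPatterns ρ).1, t⁻¹ * (blockPatterns ρ).2) := by
  have hL : (ρ * s.finAddCongr t) ∘ Fin.castAdd m = (ρ ∘ Fin.castAdd m) ∘ s := by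
    ext a; simp
  have hR : (ρ * s.finAddCongr t) ∘ Fin.natAdd k = (ρ ∘ Fin.natAdd k) ∘ t := by
    ext b; simp
  simp only [blockPatterns, hL, hR]
  rw [Tuple.sort_comp_perm (ρ.injective.comp (Fin.castAdd_injective k m)),
    Tuple.sort_comp_perm (ρ.injective.comp (Fin.natAdd_injective m k))]

/-- Every pair of patterns is realised by the same number of permutations, since right
multiplication by `finAddCongr` permutes the fibres of `blockPatterns`; counting all permutations
identifies that number as `(k + m).choose k`. -/
theorem card_blockPatterns_eq (y : Perm (Fin k) × Perm (Fin m)) :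
    #{ρ : Perm (Fin (k + m)) | blockPatterns ρ = y} = (k + m).choose k := by
  have hfib : ∀ y : Perm (Fin k) × Perm (Fin m),
      #{ρ : Perm (Fin (k + m)) | blockPatterns ρ = y} =
        #{ρ : Perm (Fin (k + m)) | blockPatterns ρ = 1} := by
    rintro ⟨σ, τ⟩
    refine (card_equiv (Equiv.mulRight (σ⁻¹.finAddCongr τ⁻¹)) fun ρ => ?_).symm
    simp [blockPatterns_mul_finAddCongr, Prod.ext_iff]
  have htotal : (k + m)! = k ! * m ! * #{ρ : Perm (Fin (k + m)) | blockPatterns ρ = 1} := by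
    calc (k + m)! = #(univ : Finset (Perm (Fin (k + m)))) := by simp [Fintype.card_perm]
      _ = ∑ y, #{ρ : Perm (Fin (k + m)) | blockPatterns ρ = y} := by
        rw [sum_card_fiberwise_eq_card_filter]; simp
      _ = _ := by simp [hfib, Fintype.card_perm]
  have hchoose := Nat.choose_mul_factorial_mul_factorial (Nat.le_add_right k m)
  rw [Nat.add_sub_cancel_left, htotal, mul_assoc, mul_comm] at hchoose
  rw [hfib]
  exact (Nat.eq_of_mul_eq_mul_left (by positivity) hchoose).symm

theorem card_blockPatterns (P : Perm (Fin k) → Prop) (Q : Perm (Fin m) → Prop) :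
    Nat.card {ρ : Perm (Fin (k + m)) // P (blockPatterns ρ).1 ∧ Q (blockPatterns ρ).2} =
      (k + m).choose k * Nat.card {σ // P σ} * Nat.card {τ // Q τ} := by
  classical
  have hfilter : univ.filter (fun ρ : Perm (Fin (k + m)) => P (blockPatterns ρ).1 ∧
      Q (blockPatterns ρ).2) =
        univ.filter (blockPatterns · ∈ univ.filter P ×ˢ univ.filter Q) := by
    ext; simp
  simp only [Nat.card_eq_fintype_card, Fintype.card_subtype]
  rw [hfilter, ← sum_card_fiberwise_eq_card_filter,
    sum_congr rfl fun y _ => card_blockPatterns_eq y, sum_const, card_product, smul_eq_mul]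
  ring

end Shuffle

theorem exists_parity_switch_of_card_eq {n : ℕ} {T : Finset ℕ} (hT : T ⊆ range (2 * n))
    (hsep : ∀ x ∈ T, x + 1 ∉ T) (hcard : #T = n) :
    ∃ i ≤ n, ∀ x < 2 * n, x ∈ T ↔ (x < 2 * i ↔ x % 2 = 0) := by
  have hpair : ∀ p < n, 2 * p ∈ T ↔ 2 * p + 1 ∉ T := by
    refine fun p hp => ⟨hsep _, fun hodd => by_contra fun heven => ?_⟩
    have hmaps : Set.MapsTo (· / 2) T ((range n).erase p) := fun x hx => by
      have := mem_range.1 (hT hx)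
      have : x ≠ 2 * p := fun h => heven (h ▸ hx)
      have : x ≠ 2 * p + 1 := fun h => hodd (h ▸ hx)
      simp only [coe_erase, coe_range, Set.mem_sdiff, Set.mem_Iio, Set.mem_singleton_iff]
      omega
    have hinj : Set.InjOn (· / 2) T := fun x hx y hy hxy => by
      by_contra hne
      rcases Nat.lt_or_gt_of_ne hne with h | h
      · exact hsep x hx (by simp only at hxy; rwa [show x + 1 = y by omega])
      · exact hsep y hy (by simp only at hxy; rwa [show y + 1 = x by omega])
    have := card_le_card_of_injOn _ hmaps hinj
    rw [card_erase_of_mem (mem_range.2 hp), card_range] at this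
    omega
  have hstep : ∀ p, p + 1 < n → 2 * p + 1 ∈ T → 2 * (p + 1) + 1 ∈ T := fun p hp h => by
    by_contra h'
    exact hsep _ h ((hpair (p + 1) hp).2 h')
  have hex : ∃ p, n ≤ p ∨ 2 * p + 1 ∈ T := ⟨n, Or.inl le_rfl⟩
  refine ⟨Nat.find hex, Nat.find_min' hex (Or.inl le_rfl), ?_⟩
  have hodd : ∀ p < n, 2 * p + 1 ∈ T ↔ Nat.find hex ≤ p := fun p hp => by
    refine ⟨fun h => Nat.find_min' hex (Or.inr h), fun h => ?_⟩
    have hfind := (Nat.find_spec hex).resolve_left (by omega)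
    induction p, h using Nat.le_induction with
    | base => exact hfind
    | succ q hq ih => exact hstep q hp (ih (by omega))
  intro x hx
  obtain ⟨p, rfl | rfl⟩ : ∃ p, x = 2 * p ∨ x = 2 * p + 1 := ⟨x / 2, by omega⟩
  · rw [hpair p (by omega), hodd p (by omega)]
    omega
  · rw [hodd p (by omega)]
    omega

/-- In the labels `v + 1`: the odd labels up to `k` and the even labels after it. -/
def paritySwitchSet (N k : ℕ) : Finset (Fin N) :=
  {v | (v : ℕ) < k ↔ (v : ℕ) % 2 = 0}

theorem mem_paritySwitchSet {N k : ℕ} {v : Fin N} :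
    v ∈ paritySwitchSet N k ↔ ((v : ℕ) < k ↔ (v : ℕ) % 2 = 0) := by
  simp [paritySwitchSet]

theorem card_paritySwitchSet (n i : ℕ) : #(paritySwitchSet (2 * n) (2 * i)) = n := by
  refine Eq.trans ?_ (card_fin n)
  refine card_bij' (fun v _ => ⟨v / 2, by omega⟩)
    (fun p _ => ⟨if (p : ℕ) < i then 2 * p else 2 * p + 1, by split_ifs <;> omega⟩)
    (fun _ _ => mem_univ _) (fun p _ => ?_) (fun v hv => ?_) (fun p _ => ?_) <;>
    simp only [mem_paritySwitchSet, Fin.ext_iff] at * <;> split_ifs <;> omega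

theorem paritySwitchSet_injOn (n : ℕ) :
    Set.InjOn (fun i => paritySwitchSet (2 * n) (2 * i)) (Set.Iic n) := by
  intro i hi j hj hij
  by_contra hne
  wlog hlt : i < j generalizing i j
  · exact this hj hi hij.symm (Ne.symm hne) (by omega)
  have hmem := congrArg (⟨2 * i, by simp at hj; omega⟩ ∈ ·) hij
  simp only [mem_paritySwitchSet, eq_iff_iff] at hmem
  omega

theorem eq_paritySwitchSet_of_isIndepSet {n : ℕ} {T : Finset (Fin (2 * n))}
    (hT : (pathGraph (2 * n)).IsIndepSet (T : Set (Fin (2 * n)))) (hcard : #T = n) :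
    ∃ i ≤ n, T = paritySwitchSet (2 * n) (2 * i) := by
  have hsep : ∀ x ∈ T.map Fin.valEmbedding, x + 1 ∉ T.map Fin.valEmbedding := by
    simp only [mem_map, Fin.valEmbedding_apply]
    rintro _ ⟨v, hv, rfl⟩ ⟨w, hw, hvw⟩
    exact hT hv hw (fun h => by simp [h] at hvw) (Or.inl hvw.symm)
  obtain ⟨i, hi, hTi⟩ := exists_parity_switch_of_card_eq (n := n)
    (fun x hx => by obtain ⟨v, -, rfl⟩ := mem_map.1 hx; simp) hsep (by rw [card_map, hcard])
  refine ⟨i, hi, ext fun v => ?_⟩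
  rw [mem_paritySwitchSet, ← hTi v v.isLt]
  simp [Fin.val_inj]

def cutPathGraph (k m : ℕ) : SimpleGraph (Fin (k + m)) where
  Adj v w := (pathGraph (k + m)).Adj v w ∧ ((v : ℕ) < k ↔ (w : ℕ) < k)
  symm := ⟨fun _ _ h => ⟨h.1.symm, h.2.symm⟩⟩
  loopless := ⟨fun _ h => (pathGraph _).loopless.irrefl _ h.1⟩

def castAddEmbedding (k m : ℕ) : pathGraph k ↪g cutPathGraph k m :=
  ⟨Fin.castAddEmb m, fun {a b} => by simp [cutPathGraph, pathGraph]⟩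

def natAddEmbedding (k m : ℕ) : pathGraph m ↪g cutPathGraph k m :=
  ⟨Fin.natAddEmb k, fun {a b} => by simp [cutPathGraph, pathGraph]; omega⟩

@[simp]
theorem castAddEmbedding_apply {k m : ℕ} (a : Fin k) : castAddEmbedding k m a = Fin.castAdd m a :=
  rfl

@[simp]
theorem natAddEmbedding_apply {k m : ℕ} (b : Fin m) : natAddEmbedding k m b = Fin.natAdd k b :=
  rfl

def PicksParity (k p : ℕ) (r : Fin k → ℕ) : Prop :=
  ∀ a : Fin k, IsPicked (pathGraph k) r a ↔ (a : ℕ) % 2 = p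

theorem gammaSet_eq_paritySwitchSet_iff {k m : ℕ} (hk : k % 2 = 0) (π : Perm (Fin (k + m))) :
    GammaSet (k + m) π = paritySwitchSet (k + m) k ↔
      PicksParity k 0 (fun a => (π⁻¹ (Fin.castAdd m a) : ℕ)) ∧
        PicksParity m 1 (fun b => (π⁻¹ (Fin.natAdd k b) : ℕ)) := by
  set r : Fin (k + m) → ℕ := fun u => (π⁻¹ u : ℕ)
  have hle : cutPathGraph k m ≤ pathGraph (k + m) := fun _ _ h => h.1
  -- The deleted edge joins `k - 1`, odd and before `k`, to `k`, even and not before `k`.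
  have hcut : ∀ v w, (pathGraph (k + m)).Adj w v → ¬ (cutPathGraph k m).Adj w v →
      w ∉ (paritySwitchSet (k + m) k : Set (Fin (k + m))) := fun v w hadj hnot => by
    simp only [cutPathGraph, pathGraph, mem_coe, mem_paritySwitchSet] at *
    omega
  have hL : ∀ a w, (cutPathGraph k m).Adj w (castAddEmbedding k m a) →
      w ∈ Set.range (castAddEmbedding k m) := fun a w hw =>
    ⟨⟨w, by simpa using hw.2⟩, rfl⟩
  have hR : ∀ b w, (cutPathGraph k m).Adj w (natAddEmbedding k m b) →
      w ∈ Set.range (natAddEmbedding k m) := fun b w hw => by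
    have hwk : k ≤ w := by simpa using hw.2
    exact ⟨⟨w - k, by omega⟩, Fin.ext (by simp; omega)⟩
  calc GammaSet (k + m) π = paritySwitchSet (k + m) k
        ↔ ∀ v, IsPicked (pathGraph (k + m)) r v ↔ v ∈ paritySwitchSet (k + m) k := by
        simp only [Finset.ext_iff, mem_GammaSet_iff, r]
    _ ↔ ∀ v, IsPicked (cutPathGraph k m) r v ↔ v ∈ paritySwitchSet (k + m) k :=
        isPicked_iff_mem_iff_of_le hle hcut
    _ ↔ _ := by
        rw [Fin.forall_fin_add]
        refine and_congr (forall_congr' fun a => ?_) (forall_congr' fun b => ?_)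
        · rw [← castAddEmbedding_apply, ← isPicked_comap _ hL]
          simp [mem_paritySwitchSet, r, Function.comp_def]
        · rw [← natAddEmbedding_apply, ← isPicked_comap _ hR]
          simp [mem_paritySwitchSet, r, Function.comp_def, Nat.add_mod, hk]

def revIso (m : ℕ) : pathGraph m ≃g pathGraph m :=
  ⟨Fin.revPerm, fun {a b} => by simp [pathGraph]; omega⟩

theorem picksParity_comp_rev {m : ℕ} (hm : m % 2 = 0) (r : Fin m → ℕ) :
    PicksParity m 0 (r ∘ Fin.rev) ↔ PicksParity m 1 r := by
  have hsurj : ∀ a w, (pathGraph m).Adj w ((revIso m).toEmbedding a) →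
      w ∈ Set.range (revIso m).toEmbedding := fun _ w _ => ⟨w.rev, by simp [revIso]⟩
  unfold PicksParity
  rw [← Fin.revPerm.forall_congr_right]
  refine forall_congr' fun a => ?_
  have hcomap := isPicked_comap (r := r) (revIso m).toEmbedding hsurj (Fin.revPerm a)
  simp only [revIso, RelIso.coe_toRelEmbedding, RelIso.coe_fn_mk, Fin.revPerm_apply,
    Fin.rev_rev] at hcomap
  rw [Fin.revPerm_apply, Fin.val_rev]
  exact iff_congr hcomap (by omega)

theorem D_eq_card_picksParity (k : ℕ) :
    D k = Nat.card {π : Perm (Fin k) // PicksParity k 0 (fun a => (π⁻¹ a : ℕ))} := by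
  unfold D PicksParity
  congr! 3 with π
  simp only [Finset.ext_iff, mem_GammaSet_iff, mem_filter, mem_univ, true_and]
  exact forall_congr' fun a => iff_congr Iff.rfl (by omega)

theorem picksParity_sort_inv_iff {k N p : ℕ} {g : Fin k → Fin N} (hg : Function.Injective g) :
    PicksParity k p (fun a => ((Tuple.sort g)⁻¹ a : ℕ)) ↔
      PicksParity k p (fun a => (g a : ℕ)) :=
  forall_congr' fun a => iff_congr (isPicked_congr_of_lt_iff (fun _ _ => by
    simp only [Fin.val_fin_lt, Tuple.sort_inv_lt_sort_inv_iff hg]) a) Iff.rfl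

theorem card_picksParity_one {m : ℕ} (hm : m % 2 = 0) :
    Nat.card {τ : Perm (Fin m) // PicksParity m 1 (fun b => (τ⁻¹ b : ℕ))} = D m := by
  rw [D_eq_card_picksParity]
  refine Nat.card_congr ((Equiv.mulLeft Fin.revPerm).subtypeEquiv fun τ => ?_)
  rw [← picksParity_comp_rev hm]
  rfl

theorem card_gammaSet_eq_paritySwitchSet {N k : ℕ} (hkN : k ≤ N) (hk : k % 2 = 0)
    (hN : N % 2 = 0) :
    Nat.card {π : Perm (Fin N) // GammaSet N π = paritySwitchSet N k} =
      N.choose k * D k * D (N - k) := by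
  obtain ⟨m, rfl⟩ := Nat.exists_eq_add_of_le hkN
  rw [Nat.add_sub_cancel_left, D_eq_card_picksParity, ← card_picksParity_one (by omega),
    ← card_blockPatterns]
  refine Nat.card_congr ((Equiv.inv _).subtypeEquiv fun π => ?_)
  rw [gammaSet_eq_paritySwitchSet_iff hk]
  exact (and_congr (picksParity_sort_inv_iff (π⁻¹.injective.comp (Fin.castAdd_injective k m)))
    (picksParity_sort_inv_iff (π⁻¹.injective.comp (Fin.natAdd_injective m k)))).symm

theorem worst_case_even_convolution_general (n : ℕ) :
    f (2 * n) = ∑ i ∈ Finset.range (n + 1),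
      Nat.choose (2 * n) (2 * i) * D (2 * i) * D (2 * n - 2 * i) := by
  classical
  set W := (range (n + 1)).image fun i => paritySwitchSet (2 * n) (2 * i)
  have hworst : ∀ π, gamma (2 * n) π = n ↔ GammaSet (2 * n) π ∈ W := fun π => by
    simp only [W, mem_image, mem_range, Nat.lt_succ_iff, gamma]
    refine ⟨fun h => ?_, fun ⟨i, _, h⟩ => h ▸ card_paritySwitchSet n i⟩
    obtain ⟨i, hi, h⟩ := eq_paritySwitchSet_of_isIndepSet (isIndepSet_GammaSet π) h
    exact ⟨i, hi, h.symm⟩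
  calc f (2 * n) = #{π | GammaSet (2 * n) π ∈ W} := by
        rw [f, show (2 * n + 1) / 2 = n by omega, Nat.card_eq_fintype_card, Fintype.card_subtype]
        simp only [hworst]
    _ = ∑ T ∈ W, #{π | GammaSet (2 * n) π = T} :=
        (sum_card_fiberwise_eq_card_filter _ _ _).symm
    _ = ∑ i ∈ range (n + 1), #{π | GammaSet (2 * n) π = paritySwitchSet (2 * n) (2 * i)} :=
        sum_image fun i hi j hj => paritySwitchSet_injOn n
          (by simpa [Nat.lt_succ_iff] using hi) (by simpa [Nat.lt_succ_iff] using hj)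
    _ = _ := sum_congr rfl fun i hi => by
        rw [← card_gammaSet_eq_paritySwitchSet (by simp at hi; omega) (by omega) (by omega),
          Nat.card_eq_fintype_card, Fintype.card_subtype]

theorem worst_case_even_convolution (n : ℕ) (hn : 1 ≤ n) :
    f (2 * n) = ∑ i ∈ Finset.range (n + 1),
      Nat.choose (2 * n) (2 * i) * D (2 * i) * D (2 * n - 2 * i) :=
  worst_case_even_convolution_general n
end

section
/- For every integer n ≥ 3 with n ≡ 0 (mod 3), the number of best-case permutations is |B_n| = n!/3^{n/3}. -/
/- `B n`: the number of best-case permutations, i.e. permutations `π` for which `γ(π)`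
   attains the minimum possible value `⌈n/3⌉`. -/
noncomputable def B (n : ℕ) : ℕ :=
  Nat.card {π : Equiv.Perm (Fin n) // gamma n π = (n + 2) / 3}


/-!
Split `Fin (3m)` into the blocks `{3k, 3k+1, 3k+2}`. The middle `3k+1` of a block can only be
dominated from inside its block, so a dominating set of size `m` meets every block exactly once;
a dominator at the left (right) end of a block then forces one at the left (right) end of the next
(previous) block, which is impossible at the last (first) block. Hence `γ(π) = m` exactly when
`Γ(π)` is the set of middles. That set is a perfect code, and the online algorithm returns a
perfect code `S` iff every vertex of `S` is revealed before all its neighbours, i.e. iff every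
block is first revealed at its middle. Rotating each block cyclically permutes `S_n` and adds the
rotation to the pattern of first-revealed positions, so all `3^m` patterns occur equally often.
-/

theorem card_eq_mul_card_fiber_of_equivariant {X G : Type*} [AddCommGroup G] (f : X → G)
    (act : G → X ≃ X) (hf : ∀ g x, f (act g x) = g + f x) (g₀ : G) :
    Nat.card X = Nat.card G * Nat.card {x // f x = g₀} := by
  have hf_symm : ∀ g x, f ((act g).symm x) = f x - g := fun g x => by
    rw [eq_sub_iff_add_eq', ← hf, Equiv.apply_symm_apply]
  rw [← Nat.card_prod]
  refine Nat.card_congr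
    { toFun := fun x => (f x - g₀, ⟨(act (f x - g₀)).symm x, by rw [hf_symm]; abel⟩)
      invFun := fun p => act p.1 p.2
      left_inv := fun x => Equiv.apply_symm_apply _ x
      right_inv := ?_ }
  rintro ⟨g, y, hy⟩
  have hg : f (act g y) - g₀ = g := by rw [hf, hy]; abel
  ext
  · exact hg
  · simp only [hg, Equiv.symm_apply_apply]

namespace Function

variable {α β γ : Type*} [Nonempty α] [Nonempty γ] [LinearOrder β] [WellFoundedLT β] {f : α → β}

theorem argmin_eq_iff (hf : f.Injective) {a : α} : argmin f = a ↔ ∀ b, f a ≤ f b :=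
  ⟨fun h => h ▸ fun b => argmin_le f b, fun h => hf (le_antisymm (argmin_le f a) (h _))⟩

theorem argmin_comp_equiv (hf : f.Injective) (e : γ ≃ α) : argmin (f ∘ e) = e.symm (argmin f) :=
  (argmin_eq_iff (hf.comp e.injective)).2 fun b => by simpa using argmin_le f (e b)

end Function

section OnlineDomination

variable {V : Type*} [DecidableEq V] (G : SimpleGraph V)

def IsDominatingSet (D : Finset V) : Prop := ∀ v, v ∈ D ∨ ∃ w ∈ D, G.Adj w v

def IsPerfectCode (S : Finset V) : Prop := ∀ v, ∃! s, s ∈ S ∧ (s = v ∨ G.Adj s v)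

theorem mem_domList_append_singleton {l : List V} {a v : V} :
    v ∈ domList G (l ++ [a]) ↔ v ∈ domList G l ∨ v = a ∧ ∀ w ∈ domList G l, ¬G.Adj w v := by
  rw [domList, List.foldl_append, ← domList]
  simp only [List.foldl_cons, List.foldl_nil]
  split_ifs with h
  · refine ⟨Or.inl, ?_⟩
    rintro (hv | ⟨rfl, hv⟩)
    · exact hv
    · obtain ⟨w, hw, hadj⟩ := h
      exact absurd hadj (hv w hw)
  · push Not at h
    rw [Finset.mem_insert]
    constructor
    · rintro (rfl | hv)
      · exact Or.inr ⟨rfl, h⟩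
      · exact Or.inl hv
    · rintro (hv | ⟨rfl, -⟩)
      · exact Or.inr hv
      · exact Or.inl rfl

variable {n : ℕ} (π : Fin n ≃ V)

noncomputable def domPrefix (i : ℕ) : Finset V := domList G ((List.ofFn π).take i)

theorem mem_domPrefix {i : ℕ} (hi : i ≤ n) {v : V} :
    v ∈ domPrefix G π i ↔ (π.symm v : ℕ) < i ∧ ∀ w ∈ domPrefix G π (π.symm v), ¬G.Adj w v := by
  induction i with
  | zero => simp [domPrefix, domList]
  | succ i ih =>
    have hi' : i < n := hi
    rw [domPrefix, List.take_add_one, List.getElem?_ofFn, dif_pos hi', Option.toList_some,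
      mem_domList_append_singleton, ← domPrefix, ih hi'.le]
    constructor
    · rintro (⟨hlt, hv⟩ | ⟨rfl, hv⟩)
      · exact ⟨hlt.trans (Nat.lt_succ_self i), hv⟩
      · simpa using hv
    · rintro ⟨hlt, hv⟩
      rcases Nat.lt_succ_iff_lt_or_eq.1 hlt with hlt | heq
      · exact Or.inl ⟨hlt, hv⟩
      · obtain rfl : v = π ⟨i, hi'⟩ := by rw [← Equiv.symm_apply_eq]; exact Fin.ext heq
        exact Or.inr ⟨rfl, by simpa using hv⟩

theorem domList_ofFn_eq_domPrefix : domList G (List.ofFn π) = domPrefix G π n := by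
  rw [domPrefix, List.take_of_length_le (by simp)]

theorem mem_domList_ofFn {v : V} :
    v ∈ domList G (List.ofFn π) ↔ ∀ w ∈ domPrefix G π (π.symm v), ¬G.Adj w v := by
  simp [domList_ofFn_eq_domPrefix, mem_domPrefix G π le_rfl]

theorem domPrefix_subset_domList {i : ℕ} (hi : i ≤ n) :
    domPrefix G π i ⊆ domList G (List.ofFn π) := fun _ hv =>
  (mem_domList_ofFn G π).2 ((mem_domPrefix G π hi).1 hv).2

theorem isDominatingSet_domList_ofFn : IsDominatingSet G (domList G (List.ofFn π)) := by
  intro v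
  by_cases hv : ∀ w ∈ domPrefix G π (π.symm v), ¬G.Adj w v
  · exact Or.inl ((mem_domList_ofFn G π).2 hv)
  · push Not at hv
    obtain ⟨w, hw, hadj⟩ := hv
    exact Or.inr ⟨w, domPrefix_subset_domList G π (π.symm v).isLt.le hw, hadj⟩

theorem domList_ofFn_eq_iff {S : Finset V} (hS : IsPerfectCode G S) :
    domList G (List.ofFn π) = S ↔ ∀ s ∈ S, ∀ v, G.Adj s v → π.symm s < π.symm v := by
  constructor
  · intro hΓ s hs v hadj
    by_contra! hvs
    have hvS : v ∉ S := fun hv => G.loopless.irrefl v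
      (((hS v).unique ⟨hs, Or.inr hadj⟩ ⟨hv, Or.inl rfl⟩) ▸ hadj)
    rw [← hΓ, mem_domList_ofFn] at hvS
    push Not at hvS
    obtain ⟨w, hw, hwv⟩ := hvS
    have hwS : w ∈ S := hΓ ▸ domPrefix_subset_domList G π (π.symm v).isLt.le hw
    -- `s` is the only neighbour of `v` in `S`, but it is revealed after `v`
    obtain rfl := (hS v).unique ⟨hwS, Or.inr hwv⟩ ⟨hs, Or.inr hadj⟩
    rw [mem_domPrefix G π (π.symm v).isLt.le] at hw
    exact absurd hw.1 (not_lt.2 hvs)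
  · intro hfirst
    have hS_sub : ∀ s ∈ S, s ∈ domList G (List.ofFn π) := by
      intro s hs
      rw [mem_domList_ofFn]
      intro w hw hadj
      rw [mem_domPrefix G π (π.symm s).isLt.le] at hw
      exact absurd (hfirst s hs w hadj.symm) (not_lt.2 (Fin.le_of_lt hw.1))
    ext v
    refine ⟨fun hv => ?_, hS_sub v⟩
    by_contra hvS
    obtain ⟨s, ⟨hs, hsv⟩, -⟩ := hS v
    have hadj : G.Adj s v := hsv.resolve_left (by rintro rfl; exact hvS hs)
    rw [mem_domList_ofFn] at hv
    refine hv s ?_ hadj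
    rw [mem_domPrefix G π (π.symm v).isLt.le]
    exact ⟨hfirst s hs v hadj, (mem_domList_ofFn G π).1 (hS_sub s hs)⟩

end OnlineDomination

section Blocks

variable {m b : ℕ}

theorem injective_symm_finProdFinEquiv_mk (τ : Equiv.Perm (Fin (m * b))) (k : Fin m) :
    (fun j => τ.symm (finProdFinEquiv (k, j))).Injective :=
  (τ.symm.injective.comp finProdFinEquiv.injective).comp (Prod.mk_right_injective k)

variable [NeZero b]

/-- The `k`-th block of `Fin (m * b)` is `{j + b * k | j : Fin b}`; it is rotated by `c k`. -/
def blockRotation (c : Fin m → Fin b) : Equiv.Perm (Fin (m * b)) :=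
  finProdFinEquiv.permCongr (Equiv.prodShear (Equiv.refl _) fun k => Equiv.addRight (c k))

theorem blockRotation_symm_apply (c : Fin m → Fin b) (k : Fin m) (j : Fin b) :
    (blockRotation c).symm (finProdFinEquiv (k, j)) = finProdFinEquiv (k, j - c k) := by
  rw [Equiv.symm_apply_eq, blockRotation, Equiv.permCongr_apply]
  simp

noncomputable def firstInBlock (τ : Equiv.Perm (Fin (m * b))) (k : Fin m) : Fin b :=
  Function.argmin fun j => τ.symm (finProdFinEquiv (k, j))

theorem firstInBlock_blockRotation_mul (c : Fin m → Fin b) (τ : Equiv.Perm (Fin (m * b))) :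
    firstInBlock (blockRotation c * τ) = c + firstInBlock τ := by
  funext k
  have hcomp : (fun j => (blockRotation c * τ).symm (finProdFinEquiv (k, j))) =
      (fun j => τ.symm (finProdFinEquiv (k, j))) ∘ Equiv.subRight (c k) := by
    funext j
    simp [Equiv.Perm.mul_def, blockRotation_symm_apply]
  rw [firstInBlock, hcomp, Function.argmin_comp_equiv (injective_symm_finProdFinEquiv_mk τ k)]
  simp [firstInBlock, add_comm]

theorem firstInBlock_eq_const_iff (τ : Equiv.Perm (Fin (m * b))) (j₀ : Fin b) :
    firstInBlock τ = (fun _ => j₀) ↔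
      ∀ k j, j ≠ j₀ → τ.symm (finProdFinEquiv (k, j₀)) < τ.symm (finProdFinEquiv (k, j)) := by
  simp only [funext_iff, firstInBlock,
    Function.argmin_eq_iff (injective_symm_finProdFinEquiv_mk τ _)]
  refine forall_congr' fun k => ⟨fun h j hj => lt_of_le_of_ne (h j) ?_, fun h j => ?_⟩
  · exact fun h' => hj ((injective_symm_finProdFinEquiv_mk τ k) h').symm
  · rcases eq_or_ne j j₀ with rfl | hj
    · exact le_rfl
    · exact (h j hj).le

theorem card_firstInBlock_eq_const (j₀ : Fin b) :
    Nat.card {τ : Equiv.Perm (Fin (m * b)) // firstInBlock τ = fun _ => j₀} * b ^ m =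
      (m * b).factorial := by
  have := card_eq_mul_card_fiber_of_equivariant firstInBlock
    (fun c => Equiv.mulLeft (blockRotation c)) firstInBlock_blockRotation_mul (fun _ : Fin m => j₀)
  rw [Nat.card_perm, Nat.card_fun, Nat.card_fin, Nat.card_fin, Nat.card_fin] at this
  rw [this, mul_comm]

end Blocks

section Path

variable {m : ℕ}

theorem pathGraph_adj {n : ℕ} {i j : Fin n} :
    (pathGraph n).Adj i j ↔ (i : ℕ) + 1 = j ∨ (j : ℕ) + 1 = i :=
  Iff.rfl

def middles (m : ℕ) : Finset (Fin (m * 3)) :=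
  Finset.univ.map
    ((Function.Embedding.sectL (Fin m) (1 : Fin 3)).trans finProdFinEquiv.toEmbedding)

theorem mem_middles {v : Fin (m * 3)} : v ∈ middles m ↔ (v : ℕ) % 3 = 1 := by
  simp only [middles, Finset.mem_map, Finset.mem_univ, true_and, Function.Embedding.trans_apply,
    Function.Embedding.sectL_apply, Equiv.coe_toEmbedding, Fin.ext_iff, finProdFinEquiv_apply_val]
  constructor
  · rintro ⟨k, hk⟩
    simp only [Fin.val_one] at hk
    omega
  · intro h
    exact ⟨⟨v / 3, by omega⟩, by simp only [Fin.val_one]; omega⟩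

theorem card_middles : (middles m).card = m := by
  simp [middles]

theorem isPerfectCode_middles : IsPerfectCode (pathGraph (m * 3)) (middles m) := by
  intro v
  refine ⟨⟨3 * (v / 3) + 1, by omega⟩, ?_, ?_⟩ <;>
    simp only [mem_middles, Fin.ext_iff, pathGraph_adj] <;> omega

variable {D : Finset (Fin (m * 3))}

/-- The middle of a block can only be dominated from inside its block. -/
theorem range_subset_image_div_three_of_isDominatingSet
    (hD : IsDominatingSet (pathGraph (m * 3)) D) :
    Finset.range m ⊆ D.image fun d : Fin (m * 3) => (d : ℕ) / 3 := by
  intro k hk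
  rw [Finset.mem_range] at hk
  rw [Finset.mem_image]
  obtain hv | ⟨w, hw, hadj⟩ := hD ⟨3 * k + 1, by omega⟩
  · exact ⟨_, hv, by dsimp only; omega⟩
  · rw [pathGraph_adj] at hadj
    exact ⟨w, hw, by dsimp only at hadj; omega⟩

/-- Otherwise the right end of the block of the rightmost such `d` is not dominated. -/
theorem mod_three_ne_zero_of_isDominatingSet (hD : IsDominatingSet (pathGraph (m * 3)) D)
    (hblock : Set.InjOn (fun d : Fin (m * 3) => (d : ℕ) / 3) D) {d : Fin (m * 3)}
    (hd : d ∈ D) : (d : ℕ) % 3 ≠ 0 := by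
  intro hd0
  obtain ⟨r, hr, hmax⟩ := (D.filter fun d : Fin (m * 3) => (d : ℕ) % 3 = 0).exists_max_image
    (fun d => (d : ℕ)) ⟨d, Finset.mem_filter.2 ⟨hd, hd0⟩⟩
  rw [Finset.mem_filter] at hr
  obtain hv | ⟨w, hw, hadj⟩ := hD ⟨r + 2, by omega⟩
  · have := congrArg Fin.val (hblock hr.1 hv (by dsimp only; omega))
    dsimp only at this
    omega
  · rw [pathGraph_adj] at hadj
    simp only at hadj
    by_cases hw0 : (w : ℕ) % 3 = 0
    · have := hmax w (Finset.mem_filter.2 ⟨hw, hw0⟩)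
      omega
    · have := congrArg Fin.val (hblock hr.1 hw (by dsimp only; omega))
      omega

/-- Otherwise the left end of the block of the leftmost such `d` is not dominated. -/
theorem mod_three_ne_two_of_isDominatingSet (hD : IsDominatingSet (pathGraph (m * 3)) D)
    (hblock : Set.InjOn (fun d : Fin (m * 3) => (d : ℕ) / 3) D) {d : Fin (m * 3)}
    (hd : d ∈ D) : (d : ℕ) % 3 ≠ 2 := by
  intro hd2
  obtain ⟨l, hl, hmin⟩ := (D.filter fun d : Fin (m * 3) => (d : ℕ) % 3 = 2).exists_min_image
    (fun d => (d : ℕ)) ⟨d, Finset.mem_filter.2 ⟨hd, hd2⟩⟩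
  rw [Finset.mem_filter] at hl
  obtain hv | ⟨w, hw, hadj⟩ := hD ⟨l - 2, by omega⟩
  · have := congrArg Fin.val (hblock hl.1 hv (by dsimp only; omega))
    dsimp only at this
    omega
  · rw [pathGraph_adj] at hadj
    simp only at hadj
    by_cases hw2 : (w : ℕ) % 3 = 2
    · have := hmin w (Finset.mem_filter.2 ⟨hw, hw2⟩)
      omega
    · have := congrArg Fin.val (hblock hl.1 hw (by dsimp only; omega))
      omega

theorem eq_middles_of_isDominatingSet (hD : IsDominatingSet (pathGraph (m * 3)) D)
    (hcard : D.card ≤ m) : D = middles m := by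
  have hm : m ≤ (D.image fun d : Fin (m * 3) => (d : ℕ) / 3).card := by
    simpa using Finset.card_le_card (range_subset_image_div_three_of_isDominatingSet hD)
  have hblock : Set.InjOn (fun d : Fin (m * 3) => (d : ℕ) / 3) D :=
    Finset.card_image_iff.1 (le_antisymm Finset.card_image_le (hm.trans' hcard))
  refine Finset.eq_of_subset_of_card_le (fun d hd => mem_middles.2 ?_) ?_
  · have := mod_three_ne_zero_of_isDominatingSet hD hblock hd
    have := mod_three_ne_two_of_isDominatingSet hD hblock hd
    omega
  · rw [card_middles]
    exact hm.trans Finset.card_image_le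

theorem gamma_eq_iff (π : Equiv.Perm (Fin (m * 3))) :
    gamma (m * 3) π = m ↔
      ∀ s ∈ middles m, ∀ v, (pathGraph (m * 3)).Adj s v → π.symm s < π.symm v := by
  rw [← domList_ofFn_eq_iff _ π isPerfectCode_middles]
  refine ⟨fun h => eq_middles_of_isDominatingSet (isDominatingSet_domList_ofFn _ π) h.le,
    fun h => (congrArg Finset.card h).trans card_middles⟩

theorem forall_middles_lt_iff (π : Equiv.Perm (Fin (m * 3))) :
    (∀ s ∈ middles m, ∀ v, (pathGraph (m * 3)).Adj s v → π.symm s < π.symm v) ↔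
      firstInBlock π = fun _ => 1 := by
  rw [firstInBlock_eq_const_iff]
  constructor
  · intro h k j hj
    refine h _ (Finset.mem_map_of_mem _ (Finset.mem_univ k)) _ ?_
    have : (j : ℕ) ≠ 1 := fun h => hj (Fin.ext h)
    simp only [pathGraph_adj, finProdFinEquiv_apply_val, Function.Embedding.trans_apply,
      Function.Embedding.sectL_apply, Equiv.coe_toEmbedding, Fin.val_one]
    omega
  · intro h s hs v hadj
    obtain ⟨⟨k, i⟩, rfl⟩ := finProdFinEquiv.surjective s
    obtain ⟨⟨k', j⟩, rfl⟩ := finProdFinEquiv.surjective v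
    simp only [mem_middles, pathGraph_adj, finProdFinEquiv_apply_val] at hs hadj
    obtain rfl : i = 1 := Fin.ext (by simp only [Fin.val_one]; omega)
    obtain rfl : k = k' := Fin.ext (by simp only [Fin.val_one] at hadj; omega)
    refine h k j fun hj => ?_
    subst hj
    simp at hadj

end Path

theorem best_case_count_zero_mod_three_general (n : ℕ) (h3 : n % 3 = 0) :
    (B n : ℝ) = (Nat.factorial n : ℝ) / 3 ^ (n / 3) := by
  obtain ⟨m, rfl⟩ : ∃ m, n = m * 3 := ⟨n / 3, by omega⟩
  have hB : B (m * 3) = Nat.card {π : Equiv.Perm (Fin (m * 3)) // firstInBlock π = fun _ => 1} := by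
    rw [B, show (m * 3 + 2) / 3 = m by omega]
    exact Nat.card_congr
      (Equiv.subtypeEquivRight fun π => (gamma_eq_iff π).trans (forall_middles_lt_iff π))
  rw [eq_div_iff (by positivity), Nat.mul_div_cancel m three_pos, hB]
  exact_mod_cast card_firstInBlock_eq_const 1

theorem best_case_count_zero_mod_three (n : ℕ) (hn : 3 ≤ n) (h3 : n % 3 = 0) :
    (B n : ℝ) = (Nat.factorial n : ℝ) / 3 ^ (n / 3) :=
  best_case_count_zero_mod_three_general n h3
end
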